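/- arXiv:0707.1473 — 10 statements merged into one kernel-verified Lean document; each statement's English description precedes it below -/
import Mathlib

section
/- Let p > 1 be a real number and let (λ_n)_{n≥1} be a sequence of positive real numbers with Λ_n = λ_1 + ... + λ_n. If there is a real number L with L < p such that Λ_{n+1}/λ_{n+1} − Λ_n/λ_n ≤ L for every integer n ≥ 1, then for every nonnegative real sequence (a_n) with Σ_{n=1}^∞ a_n^p < ∞ one has Σ_{n=1}^∞ ( (1/Λ_n) Σ_{k=1}^n λ_k a_k )^p ≤ (p/(p−L))^p Σ_{n=1}^∞ a_n^p. -/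
/-!
Write `A n` for the weighted means and `s n = Λ n / λ (n + 1)`, so that the hypothesis reads
`s (n + 1) ≤ s n + L` and `a (n + 1) = (s n + 1) A (n + 1) - s n A n`. Young's inequality
`A n · A (n + 1) ^ (p - 1) ≤ A n ^ p / p + A (n + 1) ^ p / q` then gives the telescoping estimate
`A (n + 1) ^ p - c a (n + 1) A (n + 1) ^ (p - 1) ≤ H n - H (n + 1)` with `H n = (c / p) s n A n ^ p`,
the choice `c = p / (p - L)` being exactly what makes the coefficients of `A (n + 1) ^ p` match.
As `H 0 = 0 ≤ H N`, summing gives `∑ A ^ p ≤ c ∑ a A ^ (p - 1)`, and a second use of Young's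
inequality, `c a A ^ (p - 1) ≤ (c a) ^ p / p + A ^ p / q`, absorbs the right-hand side.
-/

open Finset Real

lemma mul_rpow_sub_one_le_of_holderConjugate {p q x y : ℝ} (hpq : p.HolderConjugate q)
    (hx : 0 ≤ x) (hy : 0 ≤ y) : y * x ^ (p - 1) ≤ y ^ p / p + x ^ p / q := by
  have h := young_inequality_of_nonneg hy (rpow_nonneg hx (p - 1)) hpq
  rwa [← rpow_mul hx, hpq.sub_one_mul_conj] at h

lemma rpow_eq_mul_rpow_sub_one {p x : ℝ} (hp : 1 < p) (hx : 0 ≤ x) : x ^ p = x * x ^ (p - 1) := by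
  rw [mul_comm, ← rpow_add_one' hx (by linarith), sub_add_cancel]

lemma rpow_sub_mul_rpow_sub_one_le {p s c x y : ℝ} (hp : 1 < p) (hs : 0 ≤ s) (hc : 0 ≤ c)
    (hx : 0 ≤ x) (hy : 0 ≤ y) :
    x ^ p - c * (((s + 1) * x - s * y) * x ^ (p - 1)) ≤
      c / p * s * y ^ p + (1 - c - c / p * s) * x ^ p := by
  have hpq := HolderConjugate.conjExponent hp
  have hyoung := mul_le_mul_of_nonneg_left
    (mul_rpow_sub_one_le_of_holderConjugate hpq hx hy) (mul_nonneg hc hs)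
  have hq : (conjExponent p)⁻¹ = 1 - p⁻¹ := hpq.one_sub_inv.symm
  rw [rpow_eq_mul_rpow_sub_one hp hx] at hyoung ⊢
  simp only [div_eq_mul_inv, hq] at hyoung ⊢
  linear_combination hyoung

lemma sum_rpow_le_of_le_mul_sum {ι : Type*} {s : Finset ι} {u v : ι → ℝ} {p c : ℝ} (hp : 1 < p)
    (hc : 0 ≤ c) (hu : ∀ i ∈ s, 0 ≤ u i) (hv : ∀ i ∈ s, 0 ≤ v i)
    (h : ∑ i ∈ s, u i ^ p ≤ c * ∑ i ∈ s, v i * u i ^ (p - 1)) :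
    ∑ i ∈ s, u i ^ p ≤ c ^ p * ∑ i ∈ s, v i ^ p := by
  have hpq := HolderConjugate.conjExponent hp
  have hyoung : c * ∑ i ∈ s, v i * u i ^ (p - 1) ≤
      c ^ p * (∑ i ∈ s, v i ^ p) / p + (∑ i ∈ s, u i ^ p) / conjExponent p := by
    rw [mul_sum, mul_sum, sum_div, sum_div, ← sum_add_distrib]
    refine sum_le_sum fun i hi => ?_
    rw [← mul_assoc, ← mul_rpow hc (hv i hi)]
    exact mul_rpow_sub_one_le_of_holderConjugate hpq (hu i hi) (mul_nonneg hc (hv i hi))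
  have hq : (conjExponent p)⁻¹ = 1 - p⁻¹ := hpq.one_sub_inv.symm
  simp only [div_eq_mul_inv, hq] at hyoung
  nlinarith [inv_pos.2 (zero_lt_one.trans hp)]

noncomputable section WeightedMean

variable (lam a : ℕ → ℝ)

def weightSum (n : ℕ) : ℝ := ∑ i ∈ Icc 1 n, lam i

def weightedMean (n : ℕ) : ℝ := 1 / weightSum lam n * ∑ k ∈ Icc 1 n, lam k * a k

def weightRatio (n : ℕ) : ℝ := weightSum lam n / lam (n + 1)

variable {lam a}

@[simp] lemma weightSum_zero : weightSum lam 0 = 0 := by simp [weightSum]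

lemma weightSum_succ (n : ℕ) : weightSum lam (n + 1) = weightSum lam n + lam (n + 1) :=
  sum_Icc_succ_top (by omega) _

lemma weightSum_pos (hlam : ∀ n, 1 ≤ n → 0 < lam n) {n : ℕ} (hn : 1 ≤ n) :
    0 < weightSum lam n :=
  sum_pos (fun i hi => hlam i (mem_Icc.1 hi).1) ⟨1, mem_Icc.2 ⟨le_rfl, hn⟩⟩

lemma weightSum_nonneg (hlam : ∀ n, 1 ≤ n → 0 < lam n) (n : ℕ) : 0 ≤ weightSum lam n :=
  sum_nonneg fun i hi => (hlam i (mem_Icc.1 hi).1).le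

@[simp] lemma weightedMean_zero : weightedMean lam a 0 = 0 := by simp [weightedMean]

lemma weightedMean_nonneg (hlam : ∀ n, 1 ≤ n → 0 < lam n) (ha : ∀ n, 1 ≤ n → 0 ≤ a n)
    (n : ℕ) : 0 ≤ weightedMean lam a n :=
  mul_nonneg (one_div_nonneg.2 (weightSum_nonneg hlam n)) <|
    sum_nonneg fun k hk => mul_nonneg (hlam k (mem_Icc.1 hk).1).le (ha k (mem_Icc.1 hk).1)

lemma weightSum_mul_weightedMean (hlam : ∀ n, 1 ≤ n → 0 < lam n) (n : ℕ) :
    weightSum lam n * weightedMean lam a n = ∑ k ∈ Icc 1 n, lam k * a k := by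
  rcases Nat.eq_zero_or_pos n with rfl | hn
  · simp
  · have := (weightSum_pos hlam hn).ne'
    rw [weightedMean]
    field_simp

@[simp] lemma weightRatio_zero : weightRatio lam 0 = 0 := by simp [weightRatio]

lemma weightRatio_nonneg (hlam : ∀ n, 1 ≤ n → 0 < lam n) (n : ℕ) : 0 ≤ weightRatio lam n :=
  div_nonneg (weightSum_nonneg hlam n) (hlam (n + 1) (by omega)).le

lemma weightRatio_add_one (hlam : ∀ n, 1 ≤ n → 0 < lam n) (n : ℕ) :
    weightRatio lam n + 1 = weightSum lam (n + 1) / lam (n + 1) := by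
  rw [weightRatio, weightSum_succ, add_div, div_self (hlam (n + 1) (by omega)).ne']

lemma weightRatio_succ_le {L : ℝ} (hlam : ∀ n, 1 ≤ n → 0 < lam n)
    (hcond : ∀ n, 1 ≤ n → weightSum lam (n + 1) / lam (n + 1) - weightSum lam n / lam n ≤ L)
    (n : ℕ) : weightRatio lam (n + 1) ≤ weightRatio lam n + L := by
  have h := hcond (n + 1) (by omega)
  rw [← weightRatio_add_one hlam, ← weightRatio_add_one hlam] at h
  linarith

lemma eq_weightedMean_succ (hlam : ∀ n, 1 ≤ n → 0 < lam n) (n : ℕ) :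
    a (n + 1) = (weightRatio lam n + 1) * weightedMean lam a (n + 1) -
      weightRatio lam n * weightedMean lam a n := by
  have hl := (hlam (n + 1) (by omega)).ne'
  have hrec := weightSum_mul_weightedMean (a := a) hlam (n + 1)
  rw [sum_Icc_succ_top (by omega), ← weightSum_mul_weightedMean hlam] at hrec
  rw [weightRatio_add_one hlam, weightRatio]
  field_simp
  linarith

lemma weightedMean_rpow_sub_le {p L : ℝ} (hp : 1 < p) (hLp : L < p)
    (hlam : ∀ n, 1 ≤ n → 0 < lam n) (ha : ∀ n, 1 ≤ n → 0 ≤ a n)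
    (hcond : ∀ n, 1 ≤ n → weightSum lam (n + 1) / lam (n + 1) - weightSum lam n / lam n ≤ L)
    (n : ℕ) :
    weightedMean lam a (n + 1) ^ p -
        p / (p - L) * (a (n + 1) * weightedMean lam a (n + 1) ^ (p - 1)) ≤
      p / (p - L) / p * weightRatio lam n * weightedMean lam a n ^ p -
        p / (p - L) / p * weightRatio lam (n + 1) * weightedMean lam a (n + 1) ^ p := by
  have hpL : 0 < p - L := by linarith
  have hc : 0 ≤ p / (p - L) / p := by positivity
  have hstep := rpow_sub_mul_rpow_sub_one_le (c := p / (p - L)) hp (weightRatio_nonneg hlam n) (by positivity)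
    (weightedMean_nonneg hlam ha (n + 1)) (weightedMean_nonneg hlam ha n)
  rw [← eq_weightedMean_succ hlam] at hstep
  have hcoeff : 1 - p / (p - L) - p / (p - L) / p * weightRatio lam n ≤
      -(p / (p - L) / p * weightRatio lam (n + 1)) := by
    have h1 : 1 - p / (p - L) + p / (p - L) / p * L = 0 := by
      field_simp
      ring
    linarith [mul_le_mul_of_nonneg_left (weightRatio_succ_le hlam hcond n) hc]
  linarith [mul_le_mul_of_nonneg_right hcoeff
    (rpow_nonneg (weightedMean_nonneg hlam ha (n + 1)) p)]

lemma sum_weightedMean_rpow_le {p L : ℝ} (hp : 1 < p) (hLp : L < p)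
    (hlam : ∀ n, 1 ≤ n → 0 < lam n) (ha : ∀ n, 1 ≤ n → 0 ≤ a n)
    (hcond : ∀ n, 1 ≤ n → weightSum lam (n + 1) / lam (n + 1) - weightSum lam n / lam n ≤ L)
    (N : ℕ) :
    ∑ i ∈ range N, weightedMean lam a (i + 1) ^ p ≤
      p / (p - L) * ∑ i ∈ range N, a (i + 1) * weightedMean lam a (i + 1) ^ (p - 1) := by
  set H : ℕ → ℝ := fun n => p / (p - L) / p * weightRatio lam n * weightedMean lam a n ^ p
  have htele := sum_le_sum fun i (_ : i ∈ range N) =>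
    weightedMean_rpow_sub_le (a := a) hp hLp hlam ha hcond i
  rw [sum_range_sub' H, sum_sub_distrib, ← mul_sum] at htele
  have hH0 : H 0 = 0 := by simp [H]
  have hHN : 0 ≤ H N := by
    have : 0 < p - L := by linarith
    have := weightRatio_nonneg hlam N
    have := rpow_nonneg (weightedMean_nonneg hlam ha N) p
    positivity
  linarith

end WeightedMean

/-- Cartlidge's theorem (Theorem 1.1). -/
theorem stmt_0 (p L : ℝ) (hp : 1 < p) (hLp : L < p)
    (lam Lam : ℕ → ℝ)
    (hlam : ∀ n, 1 ≤ n → 0 < lam n)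
    (hLam : ∀ n, Lam n = ∑ i ∈ Finset.Icc 1 n, lam i)
    (hcond : ∀ n, 1 ≤ n → Lam (n + 1) / lam (n + 1) - Lam n / lam n ≤ L)
    (a : ℕ → ℝ) (ha : ∀ n, 1 ≤ n → 0 ≤ a n)
    (hsum : Summable fun n : ℕ => a (n + 1) ^ p) :
    (Summable fun n : ℕ =>
      ((1 / Lam (n + 1)) * ∑ k ∈ Finset.Icc 1 (n + 1), lam k * a k) ^ p) ∧
    ∑' n : ℕ, ((1 / Lam (n + 1)) * ∑ k ∈ Finset.Icc 1 (n + 1), lam k * a k) ^ p ≤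
      (p / (p - L)) ^ p * ∑' n : ℕ, a (n + 1) ^ p := by
  obtain rfl : Lam = weightSum lam := funext hLam
  have hc : 0 ≤ p / (p - L) := div_nonneg (by linarith) (by linarith)
  have hmean : ∀ n, 0 ≤ weightedMean lam a (n + 1) ^ p :=
    fun n => rpow_nonneg (weightedMean_nonneg hlam ha (n + 1)) p
  have hbound : ∀ N, ∑ i ∈ range N, weightedMean lam a (i + 1) ^ p ≤
      (p / (p - L)) ^ p * ∑' n, a (n + 1) ^ p := fun N =>
    (sum_rpow_le_of_le_mul_sum hp hc (fun i _ => weightedMean_nonneg hlam ha (i + 1))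
        (fun i _ => ha (i + 1) (by omega)) (sum_weightedMean_rpow_le hp hLp hlam ha hcond N)).trans
      (mul_le_mul_of_nonneg_left
        (hsum.sum_le_tsum _ fun i _ => rpow_nonneg (ha (i + 1) (by omega)) p)
        (rpow_nonneg hc _))
  exact ⟨summable_of_sum_range_le hmean hbound, tsum_le_of_sum_range_le hmean hbound⟩
end

section
/- Let p > 1 be a real number and let (λ_n)_{n≥1} be a sequence of positive real numbers with Λ_n = λ_1 + ... + λ_n. Suppose there is a real constant L with 0 < L < p such that for every integer n ≥ 1, Λ_{n+1}/λ_{n+1} − Λ_n/λ_n ≤ L + (λ_n/(2Λ_n))·(1 − 1/p)·L². Then for every nonnegative real sequence (a_n) with Σ_{n=1}^∞ a_n^p < ∞ one has Σ_{n=1}^∞ ( (1/Λ_n) Σ_{k=1}^n λ_k a_k )^p ≤ (p/(p−L))^p Σ_{n=1}^∞ a_n^p. -/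
/-!
Schur test with the weights `B k = (1 - u) * w k`, where `u = L / p` and
`w k = ∏_{1 ≤ j < k} (1 - u λ_j / Λ_j)`. These are chosen so that `∑_{k ≤ n} λ_k B_k = Λ_n w_{n+1}`
telescopes; Hölder's inequality with the weights `λ_k B_k` then gives
`(Λ_n⁻¹ ∑_{k ≤ n} λ_k a_k)^p ≤ Λ_n⁻¹ w_{n+1}^{p-1} ∑_{k ≤ n} λ_k B_k^{1-p} a_k^p`.
After exchanging the sums it remains to bound the tails `∑_{n ≥ k} w_{n+1}^{p-1} / Λ_n` by
`T k = w_k^{p-1} / ((1 - u) λ_k)`, which follows by telescoping from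
`w_{k+1}^{p-1} / Λ_k + T (k + 1) ≤ T k`. Divided by `T k` and combined with the hypothesis on
`Λ_{k+1}/λ_{k+1} - Λ_k/λ_k`, this is `(1 - s)^{p-1} (1 + (p-1) s + p(p-1)/2 s²) ≤ 1` for
`s = u λ_k / Λ_k ∈ [0, 1)`, whose left side is decreasing in `s` (its derivative is
`-(p+1) p (p-1)/2 s² (1 - s)^{p-2}`). Finally `λ_k B_k^{1-p} T k = (1 - u)^{-p} = (p / (p - L))^p`.
-/

open Real Finset

lemma one_sub_rpow_mul_quadratic_le_one {p s : ℝ} (hp : 1 ≤ p) (hs0 : 0 ≤ s) (hs1 : s < 1) :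
    (1 - s) ^ (p - 1) * (1 + (p - 1) * s + p * (p - 1) / 2 * s ^ 2) ≤ 1 := by
  set g : ℝ → ℝ := fun t => (1 - t) ^ (p - 1) * (1 + (p - 1) * t + p * (p - 1) / 2 * t ^ 2)
  have hderiv : ∀ t ∈ Set.Ioo (0 : ℝ) 1, HasDerivAt g
      (-((p + 1) * p * (p - 1) / 2 * t ^ 2) * (1 - t) ^ (p - 1 - 1)) t := by
    intro t ht
    have h1t : 1 - t ≠ 0 := by linarith [ht.2]
    have := (((hasDerivAt_id t).const_sub 1).rpow_const (p := p - 1) (Or.inl h1t)).mul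
      ((((hasDerivAt_id t).const_mul (p - 1)).const_add 1).add
        ((hasDerivAt_pow 2 t).const_mul (p * (p - 1) / 2)))
    refine this.congr_deriv ?_
    simp only [id, Pi.add_apply]
    rw [show (1 - t) ^ (p - 1) = (1 - t) ^ (p - 1 - 1) * (1 - t) by
      rw [← rpow_add_one h1t]; ring_nf]
    push_cast
    ring
  have hanti : AntitoneOn g (Set.Ico 0 1) := by
    apply antitoneOn_of_deriv_nonpos (convex_Ico 0 1)
    · exact ((continuous_const.sub continuous_id).rpow_const
        fun _ => Or.inr (by linarith)).continuousOn.mul (by fun_prop)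
    · rw [interior_Ico]
      exact fun t ht => (hderiv t ht).differentiableAt.differentiableWithinAt
    · rw [interior_Ico]
      intro t ht
      rw [(hderiv t ht).deriv]
      have : 0 ≤ (p + 1) * p * (p - 1) / 2 * t ^ 2 := by
        have : 0 ≤ p - 1 := by linarith
        positivity
      exact mul_nonpos_of_nonpos_of_nonneg (neg_nonpos.2 this)
        (rpow_nonneg (by linarith [ht.2]) _)
  simpa [g] using hanti ⟨le_rfl, zero_lt_one⟩ ⟨hs0, hs1⟩ hs0

lemma one_sub_rpow_mul_add_div_le_one {p L ℓ ℓ' Λ : ℝ} (hp : 1 ≤ p) (hL : 0 ≤ L) (hLp : L < p)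
    (hℓ : 0 < ℓ) (hℓ' : 0 < ℓ') (hℓΛ : ℓ ≤ Λ)
    (h : (Λ + ℓ') / ℓ' - Λ / ℓ ≤ L + ℓ / (2 * Λ) * (1 - 1 / p) * L ^ 2) :
    (1 - L / p * (ℓ / Λ)) ^ (p - 1) * ((1 - L / p) * (ℓ / Λ) + ℓ / ℓ') ≤ 1 := by
  have hp0 : 0 < p := by linarith
  have hΛ : 0 < Λ := hℓ.trans_le hℓΛ
  have hx0 : 0 ≤ ℓ / Λ := by positivity
  have hx1 : ℓ / Λ ≤ 1 := (div_le_one hΛ).2 hℓΛ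
  have hu0 : 0 ≤ L / p := by positivity
  have hu1 : L / p < 1 := (div_lt_one hp0).2 hLp
  set x := ℓ / Λ with hx
  set s := L / p * x
  have hs1 : s < 1 := by nlinarith
  have hratio : ℓ / ℓ' = x * ((Λ + ℓ') / ℓ' - Λ / ℓ) + 1 - x := by
    rw [hx]; field_simp; ring
  have hquad : (1 - L / p) * x + ℓ / ℓ' ≤ 1 + (p - 1) * s + p * (p - 1) / 2 * s ^ 2 := by
    have : (1 - L / p) * x + (x * (L + x / 2 * (1 - 1 / p) * L ^ 2) + 1 - x) =
        1 + (p - 1) * s + p * (p - 1) / 2 * s ^ 2 := by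
      simp only [s]; field_simp; ring
    rw [← this, hratio]
    have := mul_le_mul_of_nonneg_left h hx0
    rw [show ℓ / (2 * Λ) = x / 2 by rw [hx]; ring] at this
    linarith
  calc (1 - s) ^ (p - 1) * ((1 - L / p) * x + ℓ / ℓ')
      ≤ (1 - s) ^ (p - 1) * (1 + (p - 1) * s + p * (p - 1) / 2 * s ^ 2) :=
        mul_le_mul_of_nonneg_left hquad (rpow_nonneg (by linarith) _)
    _ ≤ 1 := one_sub_rpow_mul_quadratic_le_one hp (by positivity) hs1

lemma rpow_inner_le_weight_mul_Lp_of_nonneg {ι : Type*} (s : Finset ι) {p : ℝ} (hp : 1 ≤ p)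
    {w f : ι → ℝ} (hw : ∀ i ∈ s, 0 ≤ w i) (hf : ∀ i ∈ s, 0 ≤ f i) :
    (∑ i ∈ s, w i * f i) ^ p ≤ (∑ i ∈ s, w i) ^ (p - 1) * ∑ i ∈ s, w i * f i ^ p := by
  classical
  have hp0 : 0 < p := by linarith
  let w' i := if i ∈ s then w i else 0
  let f' i := if i ∈ s then f i else 0
  have hsum : ∀ g : ι → ℝ → ℝ, ∑ i ∈ s, w' i * g i (f' i) = ∑ i ∈ s, w i * g i (f i) :=
    fun g => sum_congr rfl fun i hi => by simp [w', f', hi]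
  have hholder := inner_le_weight_mul_Lp_of_nonneg s hp w' f'
    (fun i => by by_cases hi : i ∈ s <;> simp [w', hi, hw])
    (fun i => by by_cases hi : i ∈ s <;> simp [f', hi, hf])
  rw [hsum fun _ y => y, hsum fun _ y => y ^ p,
    show ∑ i ∈ s, w' i = ∑ i ∈ s, w i from sum_congr rfl fun i hi => by simp [w', hi]] at hholder
  have hW : 0 ≤ ∑ i ∈ s, w i := sum_nonneg hw
  have hY : 0 ≤ ∑ i ∈ s, w i * f i ^ p :=
    sum_nonneg fun i hi => mul_nonneg (hw i hi) (rpow_nonneg (hf i hi) p)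
  calc (∑ i ∈ s, w i * f i) ^ p
      ≤ ((∑ i ∈ s, w i) ^ (1 - p⁻¹) * (∑ i ∈ s, w i * f i ^ p) ^ p⁻¹) ^ p :=
        rpow_le_rpow (sum_nonneg fun i hi => mul_nonneg (hw i hi) (hf i hi)) hholder hp0.le
    _ = (∑ i ∈ s, w i) ^ (p - 1) * ∑ i ∈ s, w i * f i ^ p := by
        rw [mul_rpow (rpow_nonneg hW _) (rpow_nonneg hY _), ← rpow_mul hW, ← rpow_mul hY,
          inv_mul_cancel₀ hp0.ne', rpow_one, sub_mul, one_mul, inv_mul_cancel₀ hp0.ne']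

lemma sum_Icc_le_of_add_le {c T : ℕ → ℝ} {k N : ℕ} (hkN : k ≤ N + 1)
    (hstep : ∀ n ∈ Icc k N, c n + T (n + 1) ≤ T n) (hT : 0 ≤ T (N + 1)) :
    ∑ n ∈ Icc k N, c n ≤ T k := by
  calc ∑ n ∈ Icc k N, c n ≤ ∑ n ∈ Ico k (N + 1), -(T (n + 1) - T n) := by
        rw [Ico_add_one_right_eq_Icc]
        exact sum_le_sum fun n hn => by linarith [hstep n hn]
    _ = T k - T (N + 1) := by rw [sum_neg_distrib, sum_Ico_sub _ hkN, neg_sub]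
    _ ≤ T k := by linarith

lemma sum_range_succ_eq_sum_Icc (f : ℕ → ℝ) (N : ℕ) :
    ∑ n ∈ range N, f (n + 1) = ∑ n ∈ Icc 1 N, f n := by
  rw [range_eq_Ico, sum_Ico_add' f, zero_add, Ico_add_one_right_eq_Icc]

theorem sum_Icc_rpow_weightedMean_le_of_schurTest {p C : ℝ} (hp : 1 ≤ p) {lam Lam B a : ℕ → ℝ}
    {N : ℕ} (hlam : ∀ k ∈ Icc 1 N, 0 ≤ lam k) (hB : ∀ k ∈ Icc 1 N, 0 < B k)
    (ha : ∀ k ∈ Icc 1 N, 0 ≤ a k) (hLam : ∀ n ∈ Icc 1 N, 0 ≤ Lam n)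
    (htest : ∀ k ∈ Icc 1 N, lam k * B k ^ (1 - p) *
        ∑ n ∈ Icc k N, (1 / Lam n) ^ p * (∑ j ∈ Icc 1 n, lam j * B j) ^ (p - 1) ≤ C) :
    ∑ n ∈ Icc 1 N, ((1 / Lam n) * ∑ k ∈ Icc 1 n, lam k * a k) ^ p ≤
      C * ∑ k ∈ Icc 1 N, a k ^ p := by
  set c : ℕ → ℝ := fun n => (1 / Lam n) ^ p * (∑ j ∈ Icc 1 n, lam j * B j) ^ (p - 1)
  have hrow : ∀ n ∈ Icc 1 N, ((1 / Lam n) * ∑ k ∈ Icc 1 n, lam k * a k) ^ p ≤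
      ∑ k ∈ Icc 1 n, c n * (lam k * B k ^ (1 - p) * a k ^ p) := by
    intro n hn
    have hsub : Icc 1 n ⊆ Icc 1 N := Icc_subset_Icc_right (mem_Icc.1 hn).2
    have hholder := rpow_inner_le_weight_mul_Lp_of_nonneg (Icc 1 n) hp
      (w := fun k => lam k * B k) (f := fun k => a k / B k)
      (fun k hk => mul_nonneg (hlam k (hsub hk)) (hB k (hsub hk)).le)
      (fun k hk => div_nonneg (ha k (hsub hk)) (hB k (hsub hk)).le)
    have hinner : ∀ k ∈ Icc 1 n, lam k * B k * (a k / B k) = lam k * a k := fun k hk => by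
      field_simp [(hB k (hsub hk)).ne']
    have hLp : ∀ k ∈ Icc 1 n,
        lam k * B k * (a k / B k) ^ p = lam k * B k ^ (1 - p) * a k ^ p := fun k hk => by
      have hBk := hB k (hsub hk)
      rw [div_rpow (ha k (hsub hk)) hBk.le, rpow_sub hBk, rpow_one]
      field_simp [(rpow_pos_of_pos hBk p).ne']
    rw [sum_congr rfl hinner, sum_congr rfl hLp] at hholder
    have hΛ : 0 ≤ 1 / Lam n := one_div_nonneg.2 (hLam n hn)
    rw [mul_rpow hΛ (sum_nonneg fun k hk => mul_nonneg (hlam k (hsub hk)) (ha k (hsub hk))),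
      ← mul_sum, mul_assoc]
    exact mul_le_mul_of_nonneg_left hholder (rpow_nonneg hΛ _)
  calc ∑ n ∈ Icc 1 N, ((1 / Lam n) * ∑ k ∈ Icc 1 n, lam k * a k) ^ p
      ≤ ∑ n ∈ Icc 1 N, ∑ k ∈ Icc 1 n, c n * (lam k * B k ^ (1 - p) * a k ^ p) := sum_le_sum hrow
    _ = ∑ k ∈ Icc 1 N, ∑ n ∈ Icc k N, c n * (lam k * B k ^ (1 - p) * a k ^ p) :=
        sum_comm' fun _ _ => by simp only [mem_Icc]; omega
    _ = ∑ k ∈ Icc 1 N, a k ^ p * (lam k * B k ^ (1 - p) * ∑ n ∈ Icc k N, c n) := by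
        refine sum_congr rfl fun k _ => ?_
        rw [mul_sum, mul_sum]
        exact sum_congr rfl fun n _ => by ring
    _ ≤ ∑ k ∈ Icc 1 N, a k ^ p * C :=
        sum_le_sum fun k hk => mul_le_mul_of_nonneg_left (htest k hk) (rpow_nonneg (ha k hk) p)
    _ = C * ∑ k ∈ Icc 1 N, a k ^ p := by rw [mul_sum]; simp only [mul_comm]

namespace WeightedMean

variable {lam Lam : ℕ → ℝ}

lemma Lam_succ (hLam : ∀ n, Lam n = ∑ i ∈ Icc 1 n, lam i) (n : ℕ) :
    Lam (n + 1) = Lam n + lam (n + 1) := by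
  rw [hLam, hLam, sum_Icc_succ_top (Nat.le_add_left 1 n)]

lemma lam_le_Lam (hlam : ∀ n, 1 ≤ n → 0 < lam n) (hLam : ∀ n, Lam n = ∑ i ∈ Icc 1 n, lam i)
    {n : ℕ} (hn : 1 ≤ n) : lam n ≤ Lam n := by
  rw [hLam]
  exact single_le_sum (fun i hi => (hlam i (mem_Icc.1 hi).1).le) (mem_Icc.2 ⟨hn, le_rfl⟩)

noncomputable def schurWeight (u : ℝ) (lam Lam : ℕ → ℝ) (k : ℕ) : ℝ :=
  ∏ j ∈ Ico 1 k, (1 - u * (lam j / Lam j))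

lemma schurWeight_succ (u : ℝ) {k : ℕ} (hk : 1 ≤ k) :
    schurWeight u lam Lam (k + 1) = schurWeight u lam Lam k * (1 - u * (lam k / Lam k)) :=
  prod_Ico_succ_top hk _

lemma schurWeight_pos (hlam : ∀ n, 1 ≤ n → 0 < lam n)
    (hLam : ∀ n, Lam n = ∑ i ∈ Icc 1 n, lam i) {u : ℝ} (hu0 : 0 ≤ u) (hu1 : u < 1) (k : ℕ) :
    0 < schurWeight u lam Lam k := by
  refine prod_pos fun j hj => ?_
  have hj1 := (mem_Ico.1 hj).1
  have hΛ : 0 < Lam j := (hlam j hj1).trans_le (lam_le_Lam hlam hLam hj1)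
  have hx0 : 0 ≤ lam j / Lam j := div_nonneg (hlam j hj1).le hΛ.le
  have hx1 : lam j / Lam j ≤ 1 := (div_le_one hΛ).2 (lam_le_Lam hlam hLam hj1)
  nlinarith

lemma sum_mul_schurWeight (hlam : ∀ n, 1 ≤ n → 0 < lam n)
    (hLam : ∀ n, Lam n = ∑ i ∈ Icc 1 n, lam i) (u : ℝ) (n : ℕ) :
    ∑ k ∈ Icc 1 n, lam k * ((1 - u) * schurWeight u lam Lam k) =
      Lam n * schurWeight u lam Lam (n + 1) := by
  induction n with
  | zero => simp [hLam]
  | succ n ih =>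
    have hΛ : Lam (n + 1) ≠ 0 :=
      ((hlam _ le_add_self).trans_le (lam_le_Lam hlam hLam le_add_self)).ne'
    rw [sum_Icc_succ_top le_add_self, ih, schurWeight_succ u (k := n + 1) le_add_self,
      Lam_succ hLam] at *
    field_simp
    ring

lemma schurWeight_step {p L : ℝ} (hp : 1 ≤ p) (hL : 0 ≤ L) (hLp : L < p)
    (hlam : ∀ n, 1 ≤ n → 0 < lam n) (hLam : ∀ n, Lam n = ∑ i ∈ Icc 1 n, lam i)
    {k : ℕ} (hk : 1 ≤ k)
    (hcond : Lam (k + 1) / lam (k + 1) - Lam k / lam k ≤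
      L + (lam k / (2 * Lam k)) * (1 - 1 / p) * L ^ 2) :
    schurWeight (L / p) lam Lam (k + 1) ^ (p - 1) / Lam k +
        schurWeight (L / p) lam Lam (k + 1) ^ (p - 1) / ((1 - L / p) * lam (k + 1)) ≤
      schurWeight (L / p) lam Lam k ^ (p - 1) / ((1 - L / p) * lam k) := by
  have hp0 : 0 < p := by linarith
  have hu1 : 0 < 1 - L / p := sub_pos.2 ((div_lt_one hp0).2 hLp)
  have hpL : p - L ≠ 0 := by linarith
  have hℓ := hlam k hk
  have hℓ' := hlam (k + 1) le_add_self
  have hℓΛ := lam_le_Lam hlam hLam hk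
  have hΛ : 0 < Lam k := hℓ.trans_le hℓΛ
  rw [Lam_succ hLam] at hcond
  have hfactor := one_sub_rpow_mul_add_div_le_one hp hL hLp hℓ hℓ' hℓΛ hcond
  have hW := schurWeight_pos hlam hLam (div_nonneg hL hp0.le) (by linarith) k
  have hs : 0 ≤ 1 - L / p * (lam k / Lam k) := by
    have := schurWeight_pos hlam hLam (div_nonneg hL hp0.le) (by linarith) (k + 1)
    rw [schurWeight_succ _ hk] at this
    exact (pos_of_mul_pos_right this hW.le).le
  set T := schurWeight (L / p) lam Lam k ^ (p - 1) / ((1 - L / p) * lam k)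
  have hT : 0 ≤ T := by positivity
  calc schurWeight (L / p) lam Lam (k + 1) ^ (p - 1) / Lam k +
        schurWeight (L / p) lam Lam (k + 1) ^ (p - 1) / ((1 - L / p) * lam (k + 1))
      = T * ((1 - L / p * (lam k / Lam k)) ^ (p - 1) *
          ((1 - L / p) * (lam k / Lam k) + lam k / lam (k + 1))) := by
        rw [schurWeight_succ _ hk, mul_rpow hW.le hs]
        simp only [T]
        field_simp
    _ ≤ T * 1 := mul_le_mul_of_nonneg_left hfactor hT
    _ = T := mul_one T

lemma sum_schurWeight_div_le {p L : ℝ} (hp : 1 ≤ p) (hL : 0 ≤ L) (hLp : L < p)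
    (hlam : ∀ n, 1 ≤ n → 0 < lam n) (hLam : ∀ n, Lam n = ∑ i ∈ Icc 1 n, lam i)
    (hcond : ∀ n, 1 ≤ n →
      Lam (n + 1) / lam (n + 1) - Lam n / lam n ≤
        L + (lam n / (2 * Lam n)) * (1 - 1 / p) * L ^ 2)
    {k N : ℕ} (hk : k ∈ Icc 1 N) :
    ∑ n ∈ Icc k N, schurWeight (L / p) lam Lam (n + 1) ^ (p - 1) / Lam n ≤
      schurWeight (L / p) lam Lam k ^ (p - 1) / ((1 - L / p) * lam k) := by
  have hp0 : 0 < p := by linarith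
  have hu1 : 0 < 1 - L / p := sub_pos.2 ((div_lt_one hp0).2 hLp)
  obtain ⟨hk1, hkN⟩ := mem_Icc.1 hk
  refine sum_Icc_le_of_add_le
    (c := fun n => schurWeight (L / p) lam Lam (n + 1) ^ (p - 1) / Lam n)
    (T := fun n => schurWeight (L / p) lam Lam n ^ (p - 1) / ((1 - L / p) * lam n))
    (by omega) (fun n hn => ?_) ?_
  · exact schurWeight_step hp hL hLp hlam hLam (hk1.trans (mem_Icc.1 hn).1)
      (hcond n (hk1.trans (mem_Icc.1 hn).1))
  · have := schurWeight_pos hlam hLam (div_nonneg hL hp0.le) (by linarith) (N + 1)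
    have := hlam (N + 1) le_add_self
    positivity

theorem sum_Icc_rpow_weightedMean_le {p L : ℝ} (hp : 1 ≤ p) (hL : 0 ≤ L) (hLp : L < p)
    (hlam : ∀ n, 1 ≤ n → 0 < lam n) (hLam : ∀ n, Lam n = ∑ i ∈ Icc 1 n, lam i)
    (hcond : ∀ n, 1 ≤ n →
      Lam (n + 1) / lam (n + 1) - Lam n / lam n ≤
        L + (lam n / (2 * Lam n)) * (1 - 1 / p) * L ^ 2)
    {a : ℕ → ℝ} (ha : ∀ n, 1 ≤ n → 0 ≤ a n) (N : ℕ) :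
    ∑ n ∈ Icc 1 N, ((1 / Lam n) * ∑ k ∈ Icc 1 n, lam k * a k) ^ p ≤
      (p / (p - L)) ^ p * ∑ k ∈ Icc 1 N, a k ^ p := by
  have hp0 : 0 < p := by linarith
  have hu1 : 0 < 1 - L / p := sub_pos.2 ((div_lt_one hp0).2 hLp)
  set W := schurWeight (L / p) lam Lam
  have hW : ∀ k, 0 < W k := schurWeight_pos hlam hLam (div_nonneg hL hp0.le) (by linarith)
  have hΛ : ∀ n, 1 ≤ n → 0 < Lam n := fun n hn => (hlam n hn).trans_le (lam_le_Lam hlam hLam hn)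
  refine sum_Icc_rpow_weightedMean_le_of_schurTest hp (B := fun k => (1 - L / p) * W k)
    (fun k hk => (hlam k (mem_Icc.1 hk).1).le) (fun k _ => mul_pos hu1 (hW k))
    (fun k hk => ha k (mem_Icc.1 hk).1) (fun n hn => (hΛ n (mem_Icc.1 hn).1).le)
    (fun k hk => ?_)
  have hk1 := (mem_Icc.1 hk).1
  have hrow : ∀ n ∈ Icc k N, (1 / Lam n) ^ p *
      (∑ j ∈ Icc 1 n, lam j * ((1 - L / p) * W j)) ^ (p - 1) = W (n + 1) ^ (p - 1) / Lam n := by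
    intro n hn
    have hΛn := hΛ n (hk1.trans (mem_Icc.1 hn).1)
    rw [sum_mul_schurWeight hlam hLam, mul_rpow hΛn.le (hW _).le, rpow_sub_one hΛn.ne',
      div_rpow zero_le_one hΛn.le, one_rpow]
    field_simp [(rpow_pos_of_pos hΛn p).ne']
  calc lam k * ((1 - L / p) * W k) ^ (1 - p) * ∑ n ∈ Icc k N, (1 / Lam n) ^ p *
        (∑ j ∈ Icc 1 n, lam j * ((1 - L / p) * W j)) ^ (p - 1)
      = lam k * ((1 - L / p) * W k) ^ (1 - p) *
          ∑ n ∈ Icc k N, W (n + 1) ^ (p - 1) / Lam n := by rw [sum_congr rfl hrow]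
    _ ≤ lam k * ((1 - L / p) * W k) ^ (1 - p) * (W k ^ (p - 1) / ((1 - L / p) * lam k)) := by
        gcongr
        · have := hlam k hk1; have := hW k; positivity
        · exact sum_schurWeight_div_le hp hL hLp hlam hLam hcond hk
    _ = (1 - L / p) ^ (-p) := by
        have hℓ := (hlam k hk1).ne'
        have hpL : p - L ≠ 0 := by linarith
        have hWp := (rpow_pos_of_pos (hW k) (-p + 1)).ne'
        rw [mul_rpow hu1.le (hW k).le, show (1 : ℝ) - p = -p + 1 by ring, rpow_add hu1, rpow_one,
          show p - 1 = -(-p + 1) by ring, rpow_neg (hW k).le]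
        field_simp
    _ = (p / (p - L)) ^ p := by
        rw [rpow_neg hu1.le, ← inv_rpow hu1.le]
        congr 1
        field_simp

end WeightedMean

/-- Corollary 1.3. -/
theorem stmt_2 (p L : ℝ) (hp : 1 < p) (hL : 0 < L) (hLp : L < p)
    (lam Lam : ℕ → ℝ)
    (hlam : ∀ n, 1 ≤ n → 0 < lam n)
    (hLam : ∀ n, Lam n = ∑ i ∈ Finset.Icc 1 n, lam i)
    (hcond : ∀ n, 1 ≤ n →
      Lam (n + 1) / lam (n + 1) - Lam n / lam n ≤
        L + (lam n / (2 * Lam n)) * (1 - 1 / p) * L ^ 2)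
    (a : ℕ → ℝ) (ha : ∀ n, 1 ≤ n → 0 ≤ a n)
    (hsum : Summable fun n : ℕ => a (n + 1) ^ p) :
    (Summable fun n : ℕ =>
      ((1 / Lam (n + 1)) * ∑ k ∈ Finset.Icc 1 (n + 1), lam k * a k) ^ p) ∧
    ∑' n : ℕ, ((1 / Lam (n + 1)) * ∑ k ∈ Finset.Icc 1 (n + 1), lam k * a k) ^ p ≤
      (p / (p - L)) ^ p * ∑' n : ℕ, a (n + 1) ^ p := by
  have hnonneg : ∀ n : ℕ,
      0 ≤ ((1 / Lam (n + 1)) * ∑ k ∈ Icc 1 (n + 1), lam k * a k) ^ p := fun n =>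
    have hΛ := (hlam _ le_add_self).le.trans (WeightedMean.lam_le_Lam hlam hLam le_add_self)
    rpow_nonneg (mul_nonneg (one_div_nonneg.2 hΛ)
      (sum_nonneg fun k hk => mul_nonneg (hlam k (mem_Icc.1 hk).1).le (ha k (mem_Icc.1 hk).1))) p
  have hpartial : ∀ N, ∑ n ∈ range N, ((1 / Lam (n + 1)) * ∑ k ∈ Icc 1 (n + 1), lam k * a k) ^ p
      ≤ (p / (p - L)) ^ p * ∑' n : ℕ, a (n + 1) ^ p := by
    intro N
    calc ∑ n ∈ range N, ((1 / Lam (n + 1)) * ∑ k ∈ Icc 1 (n + 1), lam k * a k) ^ p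
        = ∑ n ∈ Icc 1 N, ((1 / Lam n) * ∑ k ∈ Icc 1 n, lam k * a k) ^ p :=
          sum_range_succ_eq_sum_Icc (fun n => ((1 / Lam n) * ∑ k ∈ Icc 1 n, lam k * a k) ^ p) N
      _ ≤ (p / (p - L)) ^ p * ∑ k ∈ Icc 1 N, a k ^ p :=
          WeightedMean.sum_Icc_rpow_weightedMean_le hp.le hL.le hLp hlam hLam hcond ha N
      _ ≤ (p / (p - L)) ^ p * ∑' n : ℕ, a (n + 1) ^ p := by
          rw [← sum_range_succ_eq_sum_Icc (fun k => a k ^ p)]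
          gcongr
          exact hsum.sum_le_tsum _ fun n _ => rpow_nonneg (ha _ le_add_self) p
  exact ⟨summable_of_sum_range_le hnonneg hpartial, tsum_le_of_sum_range_le hnonneg hpartial⟩
end

section
/- Let (λ_n)_{n≥1} be a sequence of positive real numbers with Λ_n = λ_1 + ... + λ_n, and suppose there is a real number M such that for every integer n ≥ 1, (Λ_n/λ_n) · log( (Λ_{n+1}/λ_{n+1}) / (Λ_n/λ_n) ) ≤ M. Then for every nonnegative real sequence (a_n) with Σ_{n=1}^∞ a_n < ∞ one has Σ_{n=1}^∞ ( Π_{k=1}^n a_k^{λ_k/Λ_n} ) ≤ e^M · Σ_{n=1}^∞ a_n. -/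
/-!
Carleman's compensating-factor argument. Put `r n = Λ n / λ n` and choose factors `c k = exp (carlemanExponent lam Lam k)`, i.e.
`λ k * log (c k) = Λ k * log (r (k + 1)) - Λ (k - 1) * log (r k)`; the right side telescopes, so
`∏_{k ≤ n} c k ^ (λ k / Λ n) = r (n + 1)`. Weighted AM-GM applied to the numbers `c k * a k` then gives
`∏_{k ≤ n} a k ^ (λ k / Λ n) ≤ (1 / Λ n - 1 / Λ (n + 1)) * ∑_{k ≤ n} λ k * c k * a k`, and summation by
parts bounds the series by `∑ k, λ k * c k * a k / Λ k`. Finally `log (c k) = r k * log (r (k + 1) / r k) + log (r k)`,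
so the hypothesis says exactly `λ k * c k ≤ e^M * Λ k`.
-/

open Finset Real

lemma sum_Icc_one_eq_sum_range {M : Type*} [AddCommMonoid M] (f : ℕ → M) (N : ℕ) :
    ∑ k ∈ Icc 1 N, f k = ∑ i ∈ range N, f (i + 1) := by
  induction N with
  | zero => rfl
  | succ N ih => rw [sum_range_succ, sum_Icc_succ_top (Nat.le_add_left 1 N), ih]

lemma sum_Icc_sub_mul_sum_Icc {R : Type*} [CommRing R] (w b : ℕ → R) (N : ℕ) :
    ∑ n ∈ Icc 1 N, (w n - w (n + 1)) * ∑ k ∈ Icc 1 n, b k =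
      ∑ k ∈ Icc 1 N, b k * (w k - w (N + 1)) := by
  induction N with
  | zero => simp
  | succ N ih =>
    simp only [sum_Icc_succ_top (Nat.le_add_left 1 N), ih, mul_sub, sum_sub_distrib, ← sum_mul]
    ring

lemma sum_Icc_le_sum_mul_of_le_sub_mul {G b w : ℕ → ℝ} {N : ℕ}
    (hb : ∀ k, 1 ≤ k → 0 ≤ b k) (hw : 0 ≤ w (N + 1))
    (hG : ∀ n, 1 ≤ n → G n ≤ (w n - w (n + 1)) * ∑ k ∈ Icc 1 n, b k) :
    ∑ n ∈ Icc 1 N, G n ≤ ∑ k ∈ Icc 1 N, b k * w k :=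
  calc ∑ n ∈ Icc 1 N, G n
      ≤ ∑ n ∈ Icc 1 N, (w n - w (n + 1)) * ∑ k ∈ Icc 1 n, b k :=
        sum_le_sum fun n hn => hG n (mem_Icc.mp hn).1
    _ = ∑ k ∈ Icc 1 N, b k * (w k - w (N + 1)) := sum_Icc_sub_mul_sum_Icc w b N
    _ ≤ ∑ k ∈ Icc 1 N, b k * w k :=
        sum_le_sum fun k hk => mul_le_mul_of_nonneg_left (by linarith) (hb k (mem_Icc.mp hk).1)

lemma exp_sum_mul_mul_prod_rpow_le {ι : Type*} (s : Finset ι) {w x a : ι → ℝ}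
    (hw : ∀ i ∈ s, 0 ≤ w i) (hw₁ : ∑ i ∈ s, w i = 1) (ha : ∀ i ∈ s, 0 ≤ a i) :
    exp (∑ i ∈ s, w i * x i) * ∏ i ∈ s, a i ^ w i ≤ ∑ i ∈ s, w i * (exp (x i) * a i) := by
  have hamgm := geom_mean_le_arith_mean_weighted s w (fun i => exp (x i) * a i) hw hw₁
    fun i hi => mul_nonneg (exp_pos _).le (ha i hi)
  refine le_of_eq_of_le ?_ hamgm
  rw [exp_sum, ← prod_mul_distrib]
  refine prod_congr rfl fun i hi => ?_
  rw [mul_rpow (exp_pos _).le (ha i hi), ← exp_mul, mul_comm (w i)]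

section CarlemanFactors

variable {lam Lam : ℕ → ℝ}

lemma Lam_zero_of_eq_sum (hLam : ∀ n, Lam n = ∑ i ∈ Icc 1 n, lam i) : Lam 0 = 0 := by
  simp [hLam]

lemma Lam_succ_of_eq_sum (hLam : ∀ n, Lam n = ∑ i ∈ Icc 1 n, lam i) (n : ℕ) :
    Lam (n + 1) = Lam n + lam (n + 1) := by
  rw [hLam, hLam, sum_Icc_succ_top (Nat.le_add_left 1 n)]

lemma Lam_pos_of_eq_sum (hlam : ∀ n, 1 ≤ n → 0 < lam n)
    (hLam : ∀ n, Lam n = ∑ i ∈ Icc 1 n, lam i) {n : ℕ} (hn : 1 ≤ n) : 0 < Lam n := by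
  rw [hLam]
  exact sum_pos (fun i hi => hlam i (mem_Icc.mp hi).1) (nonempty_Icc.mpr hn)

variable (lam Lam) in
noncomputable def carlemanPotential (k : ℕ) : ℝ :=
  Lam k * log (Lam (k + 1) / lam (k + 1))

variable (lam Lam) in
noncomputable def carlemanExponent (k : ℕ) : ℝ :=
  (carlemanPotential lam Lam k - carlemanPotential lam Lam (k - 1)) / lam k

lemma sum_mul_carlemanExponent (hlam : ∀ n, 1 ≤ n → 0 < lam n)
    (hLam : ∀ n, Lam n = ∑ i ∈ Icc 1 n, lam i) (n : ℕ) :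
    ∑ k ∈ Icc 1 n, lam k * carlemanExponent lam Lam k = carlemanPotential lam Lam n := by
  induction n with
  | zero => simp [carlemanPotential, Lam_zero_of_eq_sum hLam]
  | succ n ih =>
    rw [sum_Icc_succ_top (Nat.le_add_left 1 n), ih, carlemanExponent,
      mul_div_cancel₀ _ (hlam (n + 1) (Nat.le_add_left 1 n)).ne', Nat.add_sub_cancel]
    ring

lemma lam_mul_exp_carlemanExponent_le (hlam : ∀ n, 1 ≤ n → 0 < lam n)
    (hLam : ∀ n, Lam n = ∑ i ∈ Icc 1 n, lam i) {M : ℝ} {k : ℕ} (hk : 1 ≤ k)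
    (hcond : (Lam k / lam k) * log ((Lam (k + 1) / lam (k + 1)) / (Lam k / lam k)) ≤ M) :
    lam k * exp (carlemanExponent lam Lam k) ≤ exp M * Lam k := by
  obtain ⟨j, rfl⟩ := Nat.exists_eq_add_of_le' hk
  have hl := hlam (j + 1) hk
  have hr : 0 < Lam (j + 1) / lam (j + 1) := div_pos (Lam_pos_of_eq_sum hlam hLam hk) hl
  have hr' : 0 < Lam (j + 2) / lam (j + 2) :=
    div_pos (Lam_pos_of_eq_sum hlam hLam (by omega)) (hlam (j + 2) (by omega))
  have hexponent : carlemanExponent lam Lam (j + 1) =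
      (Lam (j + 1) / lam (j + 1)) *
        log ((Lam (j + 2) / lam (j + 2)) / (Lam (j + 1) / lam (j + 1))) +
      log (Lam (j + 1) / lam (j + 1)) := by
    rw [carlemanExponent, carlemanPotential, carlemanPotential, Nat.add_sub_cancel,
      log_div hr'.ne' hr.ne', Lam_succ_of_eq_sum hLam j]
    field_simp
    ring
  calc lam (j + 1) * exp (carlemanExponent lam Lam (j + 1))
      ≤ lam (j + 1) * (exp M * (Lam (j + 1) / lam (j + 1))) := by
        rw [hexponent, exp_add, exp_log hr]
        gcongr
    _ = exp M * Lam (j + 1) := by field_simp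

lemma prod_rpow_le_sub_inv_mul_sum (hlam : ∀ n, 1 ≤ n → 0 < lam n)
    (hLam : ∀ n, Lam n = ∑ i ∈ Icc 1 n, lam i) {a : ℕ → ℝ} (ha : ∀ n, 1 ≤ n → 0 ≤ a n)
    {n : ℕ} (hn : 1 ≤ n) :
    ∏ k ∈ Icc 1 n, a k ^ (lam k / Lam n) ≤ ((Lam n)⁻¹ - (Lam (n + 1))⁻¹) *
      ∑ k ∈ Icc 1 n, lam k * exp (carlemanExponent lam Lam k) * a k := by
  have hL := Lam_pos_of_eq_sum hlam hLam hn
  have hl' := hlam (n + 1) (Nat.le_add_left 1 n)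
  have hr : 0 < Lam (n + 1) / lam (n + 1) :=
    div_pos (Lam_pos_of_eq_sum hlam hLam (Nat.le_add_left 1 n)) hl'
  have hamgm := exp_sum_mul_mul_prod_rpow_le (Icc 1 n) (x := carlemanExponent lam Lam)
    (fun k hk => div_nonneg (hlam k (mem_Icc.mp hk).1).le hL.le)
    (by rw [← sum_div, ← hLam, div_self hL.ne']) (fun k hk => ha k (mem_Icc.mp hk).1)
  have hcompensator :
      exp (∑ k ∈ Icc 1 n, lam k / Lam n * carlemanExponent lam Lam k) =
        Lam (n + 1) / lam (n + 1) := by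
    simp_rw [div_mul_eq_mul_div, ← sum_div, sum_mul_carlemanExponent hlam hLam n,
      carlemanPotential, mul_div_cancel_left₀ _ hL.ne', exp_log hr]
  rw [hcompensator, ← le_inv_mul_iff₀ hr] at hamgm
  refine hamgm.trans_eq ?_
  rw [mul_sum, mul_sum, Lam_succ_of_eq_sum hLam n]
  refine sum_congr rfl fun k _ => ?_
  field_simp
  ring

end CarlemanFactors

/-- Theorem 1.4: weighted Carleman inequality with constant `e^M`. -/
theorem stmt_3 (M : ℝ)
    (lam Lam : ℕ → ℝ)
    (hlam : ∀ n, 1 ≤ n → 0 < lam n)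
    (hLam : ∀ n, Lam n = ∑ i ∈ Finset.Icc 1 n, lam i)
    (hcond : ∀ n, 1 ≤ n →
      (Lam n / lam n) * Real.log ((Lam (n + 1) / lam (n + 1)) / (Lam n / lam n)) ≤ M)
    (a : ℕ → ℝ) (ha : ∀ n, 1 ≤ n → 0 ≤ a n)
    (hsum : Summable fun n : ℕ => a (n + 1)) :
    (Summable fun n : ℕ =>
      ∏ k ∈ Finset.Icc 1 (n + 1), a k ^ (lam k / Lam (n + 1))) ∧
    ∑' n : ℕ, ∏ k ∈ Finset.Icc 1 (n + 1), a k ^ (lam k / Lam (n + 1)) ≤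
      Real.exp M * ∑' n : ℕ, a (n + 1) := by
  set G : ℕ → ℝ := fun n => ∏ k ∈ Icc 1 n, a k ^ (lam k / Lam n)
  have hG : ∀ n, 0 ≤ G (n + 1) := fun n =>
    prod_nonneg fun k hk => rpow_nonneg (ha k (mem_Icc.mp hk).1) _
  have hpartial (N : ℕ) : ∑ n ∈ range N, G (n + 1) ≤ exp M * ∑' n, a (n + 1) := by
    rw [← sum_Icc_one_eq_sum_range G]
    calc ∑ n ∈ Icc 1 N, G n
        ≤ ∑ k ∈ Icc 1 N, lam k * exp (carlemanExponent lam Lam k) * a k * (Lam k)⁻¹ :=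
          sum_Icc_le_sum_mul_of_le_sub_mul
            (fun k hk => mul_nonneg (mul_nonneg (hlam k hk).le (exp_pos _).le) (ha k hk))
            (inv_nonneg.mpr (Lam_pos_of_eq_sum hlam hLam (Nat.le_add_left 1 N)).le)
            (fun n hn => prod_rpow_le_sub_inv_mul_sum hlam hLam ha hn)
      _ ≤ ∑ k ∈ Icc 1 N, exp M * a k := by
          refine sum_le_sum fun k hk => ?_
          have hk := (mem_Icc.mp hk).1
          rw [mul_right_comm]
          refine mul_le_mul_of_nonneg_right ?_ (ha k hk)
          exact (mul_inv_le_iff₀ (Lam_pos_of_eq_sum hlam hLam hk)).mpr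
            (lam_mul_exp_carlemanExponent_le hlam hLam hk (hcond k hk))
      _ ≤ exp M * ∑' n, a (n + 1) := by
          rw [← mul_sum, sum_Icc_one_eq_sum_range a]
          exact mul_le_mul_of_nonneg_left
            (hsum.sum_le_tsum _ fun n _ => ha (n + 1) (Nat.le_add_left 1 n)) (exp_pos M).le
  exact ⟨summable_of_sum_range_le hG hpartial, tsum_le_of_sum_range_le hG hpartial⟩
end

section
/- Let p > 1 be a real number, N ≥ 1 an integer, and (λ_n)_{1≤n≤N+1} positive real numbers with Λ_n = λ_1 + ... + λ_n. Suppose there exist positive real numbers w_1, ..., w_N, a positive constant U, and, with the convention w_{N+1} = 0, suppose that for every 1 ≤ n ≤ N: (Σ_{i=1}^n w_i)^{p−1} ≤ U · Λ_n^p · ( w_n^{p−1}/λ_n^p − w_{n+1}^{p−1}/λ_{n+1}^p ). Then for every nonnegative real sequence (a_n)_{1≤n≤N}: Σ_{n=1}^N ( (1/Λ_n) Σ_{k=1}^n λ_k a_k )^p ≤ U · Σ_{n=1}^N a_n^p. -/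
/-!
Hölder's inequality with weights `w k` gives
`(∑_{k ≤ n} λ_k a_k)^p ≤ (∑_{k ≤ n} b_k) (∑_{k ≤ n} w_k)^(p-1)` with `b_k = (λ_k a_k)^p / w_k^(p-1)`,
and the criterion bounds the last factor by `U Λ_n^p (c_n - c_{n+1})` with `c_n = w_n^(p-1) / λ_n^p`.
Summing over `n`, Abel summation and `c_{N+1} = 0` turn the bound into `U ∑ b_k c_k = U ∑ a_k^p`.
-/

open Finset Real

theorem rpow_sum_le_sum_rpow_div_mul_rpow_sum {ι : Type*} (s : Finset ι) {p : ℝ} (hp : 1 < p)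
    {x w : ι → ℝ} (hx : ∀ i ∈ s, 0 ≤ x i) (hw : ∀ i ∈ s, 0 < w i) :
    (∑ i ∈ s, x i) ^ p ≤ (∑ i ∈ s, x i ^ p / w i ^ (p - 1)) * (∑ i ∈ s, w i) ^ (p - 1) := by
  set q := p.conjExponent
  have hpq : p.HolderConjugate q := .conjExponent hp
  have hpq' : p * (1 / q) = p - 1 := by rw [← div_eq_mul_one_div, hpq.div_conj_eq_sub_one]
  have holder := inner_le_Lp_mul_Lq_of_nonneg s hpq (f := fun i ↦ x i / w i ^ (1 / q))
    (g := fun i ↦ w i ^ (1 / q)) (fun i hi ↦ by have := hx i hi; have := hw i hi; positivity)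
    (fun i hi ↦ by have := hw i hi; positivity)
  have hfg : ∀ i ∈ s, x i / w i ^ (1 / q) * w i ^ (1 / q) = x i := fun i hi ↦
    div_mul_cancel₀ _ (rpow_pos_of_pos (hw i hi) _).ne'
  have hf : ∀ i ∈ s, (x i / w i ^ (1 / q)) ^ p = x i ^ p / w i ^ (p - 1) := fun i hi ↦ by
    rw [div_rpow (hx i hi) (rpow_nonneg (hw i hi).le _), ← rpow_mul (hw i hi).le, mul_comm, hpq']
  have hg : ∀ i ∈ s, (w i ^ (1 / q)) ^ q = w i := fun i hi ↦ by
    rw [← rpow_mul (hw i hi).le, one_div_mul_cancel hpq.symm.ne_zero, rpow_one]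
  rw [sum_congr rfl hfg, sum_congr rfl hf, sum_congr rfl hg] at holder
  have hA : 0 ≤ ∑ i ∈ s, x i ^ p / w i ^ (p - 1) :=
    sum_nonneg fun i hi ↦ by have := hx i hi; have := hw i hi; positivity
  have hW : 0 ≤ ∑ i ∈ s, w i := sum_nonneg fun i hi ↦ (hw i hi).le
  calc (∑ i ∈ s, x i) ^ p
      ≤ ((∑ i ∈ s, x i ^ p / w i ^ (p - 1)) ^ (1 / p) * (∑ i ∈ s, w i) ^ (1 / q)) ^ p :=
        rpow_le_rpow (sum_nonneg hx) holder hpq.nonneg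
    _ = _ := by
        rw [mul_rpow (by positivity) (by positivity), ← rpow_mul hA, ← rpow_mul hW,
          one_div_mul_cancel hpq.ne_zero, rpow_one, mul_comm (1 / q), hpq']

theorem sum_Icc_partialSum_mul_sub {R : Type*} [CommRing R] (b c : ℕ → R) (N : ℕ) :
    ∑ n ∈ Icc 1 N, (∑ k ∈ Icc 1 n, b k) * (c n - c (n + 1)) =
      ∑ k ∈ Icc 1 N, b k * c k - (∑ k ∈ Icc 1 N, b k) * c (N + 1) := by
  induction N with
  | zero => simp
  | succ N ih =>
    rw [sum_Icc_succ_top N.succ_pos, ih, sum_Icc_succ_top N.succ_pos, sum_Icc_succ_top N.succ_pos]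
    ring

theorem rpow_one_div_mul_sum_le {ι : Type*} (s : Finset ι) {p : ℝ} (hp : 1 < p)
    {x w : ι → ℝ} (hx : ∀ i ∈ s, 0 ≤ x i) (hw : ∀ i ∈ s, 0 < w i) {L C : ℝ} (hL : 0 < L)
    (h : (∑ i ∈ s, w i) ^ (p - 1) ≤ L ^ p * C) :
    (1 / L * ∑ i ∈ s, x i) ^ p ≤ (∑ i ∈ s, x i ^ p / w i ^ (p - 1)) * C := by
  have hA : 0 ≤ ∑ i ∈ s, x i ^ p / w i ^ (p - 1) :=
    sum_nonneg fun i hi ↦ by have := hx i hi; have := hw i hi; positivity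
  have hLp : 0 < L ^ p := rpow_pos_of_pos hL p
  calc (1 / L * ∑ i ∈ s, x i) ^ p = (∑ i ∈ s, x i) ^ p / L ^ p := by
        rw [one_div_mul_eq_div, div_rpow (sum_nonneg hx) hL.le]
    _ ≤ (∑ i ∈ s, x i ^ p / w i ^ (p - 1)) * (∑ i ∈ s, w i) ^ (p - 1) / L ^ p := by
        gcongr; exact rpow_sum_le_sum_rpow_div_mul_rpow_sum s hp hx hw
    _ ≤ (∑ i ∈ s, x i ^ p / w i ^ (p - 1)) * (L ^ p * C) / L ^ p := by gcongr
    _ = (∑ i ∈ s, x i ^ p / w i ^ (p - 1)) * C := by field_simp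

theorem stmt_6_general (p : ℝ) (hp : 1 < p) (N : ℕ)
    (lam Lam : ℕ → ℝ)
    (hlam : ∀ n, 1 ≤ n → n ≤ N + 1 → 0 < lam n)
    (hLam : ∀ n, Lam n = ∑ i ∈ Finset.Icc 1 n, lam i)
    (w : ℕ → ℝ) (hw : ∀ n, 1 ≤ n → n ≤ N → 0 < w n) (hwN : w (N + 1) = 0)
    (U : ℝ)
    (hcond : ∀ n, 1 ≤ n → n ≤ N →
      (∑ i ∈ Finset.Icc 1 n, w i) ^ (p - 1) ≤
        U * Lam n ^ p *
          (w n ^ (p - 1) / lam n ^ p - w (n + 1) ^ (p - 1) / lam (n + 1) ^ p))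
    (a : ℕ → ℝ) (ha : ∀ n, 1 ≤ n → n ≤ N → 0 ≤ a n) :
    ∑ n ∈ Finset.Icc 1 N, ((1 / Lam n) * ∑ k ∈ Finset.Icc 1 n, lam k * a k) ^ p ≤
      U * ∑ n ∈ Finset.Icc 1 N, a n ^ p := by
  set c : ℕ → ℝ := fun n ↦ w n ^ (p - 1) / lam n ^ p
  set b : ℕ → ℝ := fun k ↦ (lam k * a k) ^ p / w k ^ (p - 1)
  have hlam' : ∀ k ∈ Icc 1 N, 0 < lam k := fun k hk ↦ hlam k (mem_Icc.1 hk).1 (by grind)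
  have hw' : ∀ k ∈ Icc 1 N, 0 < w k := fun k hk ↦ hw k (mem_Icc.1 hk).1 (mem_Icc.1 hk).2
  have ha' : ∀ k ∈ Icc 1 N, 0 ≤ a k := fun k hk ↦ ha k (mem_Icc.1 hk).1 (mem_Icc.1 hk).2
  have hterm : ∀ n ∈ Icc 1 N, ((1 / Lam n) * ∑ k ∈ Icc 1 n, lam k * a k) ^ p ≤
      U * ((∑ k ∈ Icc 1 n, b k) * (c n - c (n + 1))) := by
    intro n hn
    have hsub : Icc 1 n ⊆ Icc 1 N := Icc_subset_Icc_right (mem_Icc.1 hn).2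
    have hLam_pos : 0 < Lam n := hLam n ▸ sum_pos (fun k hk ↦ hlam' k (hsub hk)) ⟨1, by grind⟩
    rw [mul_left_comm]
    refine rpow_one_div_mul_sum_le _ hp (fun k hk ↦ (mul_nonneg (hlam' k (hsub hk)).le
      (ha' k (hsub hk)))) (fun k hk ↦ hw' k (hsub hk)) hLam_pos ?_
    simpa only [mul_left_comm, mul_assoc] using hcond n (mem_Icc.1 hn).1 (mem_Icc.1 hn).2
  have hbc : ∀ k ∈ Icc 1 N, b k * c k = a k ^ p := fun k hk ↦ by
    have hwp : 0 < w k ^ (p - 1) := rpow_pos_of_pos (hw' k hk) _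
    have hlp : 0 < lam k ^ p := rpow_pos_of_pos (hlam' k hk) _
    simp only [b, c]
    rw [mul_rpow (hlam' k hk).le (ha' k hk)]
    field_simp
  have hcN : c (N + 1) = 0 := by simp [c, hwN, zero_rpow (sub_pos.2 hp).ne']
  calc _ ≤ ∑ n ∈ Icc 1 N, U * ((∑ k ∈ Icc 1 n, b k) * (c n - c (n + 1))) := sum_le_sum hterm
    _ = U * ∑ k ∈ Icc 1 N, b k * c k := by
        rw [← mul_sum, sum_Icc_partialSum_mul_sub, hcN, mul_zero, sub_zero]
    _ = U * ∑ n ∈ Icc 1 N, a n ^ p := by rw [sum_congr rfl hbc]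

/-- The Kaluza–Szegő sufficient criterion (Section 3). -/
theorem stmt_6 (p : ℝ) (hp : 1 < p) (N : ℕ) (hN : 1 ≤ N)
    (lam Lam : ℕ → ℝ)
    (hlam : ∀ n, 1 ≤ n → n ≤ N + 1 → 0 < lam n)
    (hLam : ∀ n, Lam n = ∑ i ∈ Finset.Icc 1 n, lam i)
    (w : ℕ → ℝ) (hw : ∀ n, 1 ≤ n → n ≤ N → 0 < w n) (hwN : w (N + 1) = 0)
    (U : ℝ) (hU : 0 < U)
    (hcond : ∀ n, 1 ≤ n → n ≤ N →
      (∑ i ∈ Finset.Icc 1 n, w i) ^ (p - 1) ≤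
        U * Lam n ^ p *
          (w n ^ (p - 1) / lam n ^ p - w (n + 1) ^ (p - 1) / lam (n + 1) ^ p))
    (a : ℕ → ℝ) (ha : ∀ n, 1 ≤ n → n ≤ N → 0 ≤ a n) :
    ∑ n ∈ Finset.Icc 1 N, ((1 / Lam n) * ∑ k ∈ Finset.Icc 1 n, lam k * a k) ^ p ≤
      U * ∑ n ∈ Finset.Icc 1 N, a n ^ p :=
  stmt_6_general p hp N lam Lam hlam hLam w hw hwN U hcond a ha
end

section
/- Let p > 1 be a real number and define a sequence (w_n)_{n≥1} by w_1 = 1 and w_{n+1} = ((n − 1/p)/n) · w_n for n ≥ 1. Then each w_n > 0, the relation Σ_{i=1}^n w_i = ((n − 1/p)/(1 − 1/p)) · w_n holds for all n ≥ 1, and for every integer n ≥ 1 one has (Σ_{i=1}^n w_i)^{p−1} ≤ (p/(p−1))^p · n^p · ( w_n^{p−1} − w_{n+1}^{p−1} ). -/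
/-!
With `c = 1/p`, the recursion `w (n+1) = (1 - c/n) w n` makes `(n - c) w n / (1 - c)` satisfy the
same telescoping relation as the partial sums, which gives the closed form. Substituting it, the
inequality becomes `t ^ (p-1) (1 + (p-1) s) ≤ 1` for `s = 1/(pn)` and `t = 1 - s`, which follows
from `1 - s ≤ exp (-s)` and `1 + (p-1) s ≤ exp ((p-1) s)`.
-/

open Finset Real

lemma one_sub_rpow_mul_one_add_mul_le_one {q s : ℝ} (hq : 0 ≤ q) (hs0 : 0 ≤ s) (hs1 : s ≤ 1) :
    (1 - s) ^ q * (1 + q * s) ≤ 1 :=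
  calc (1 - s) ^ q * (1 + q * s)
      ≤ exp (-s) ^ q * exp (q * s) := by
        gcongr
        · exact one_sub_le_exp_neg s
        · linarith [add_one_le_exp (q * s)]
    _ = 1 := by rw [← exp_mul, ← exp_add]; ring_nf; exact exp_zero

lemma rpow_le_mul_one_sub_rpow {p N : ℝ} (hp : 1 < p) (hN : 1 ≤ N) :
    ((N - 1 / p) / (1 - 1 / p)) ^ (p - 1) ≤
      (p / (p - 1)) ^ p * N ^ p * (1 - ((N - 1 / p) / N) ^ (p - 1)) := by
  set A := N * (p / (p - 1)) with hA
  set t := (N - 1 / p) / N with ht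
  have hA0 : 0 < A := by positivity
  have ht0 : 0 ≤ t := div_nonneg (by linarith [(div_lt_one (by linarith)).mpr hp]) (by linarith)
  have hst : t = 1 - 1 / (p * N) := by rw [ht]; field_simp
  have hkey : t ^ (p - 1) * (1 + 1 / A) ≤ 1 := by
    have hs : (p - 1) * (1 / (p * N)) = 1 / A := by rw [hA]; field_simp
    rw [← hs, hst]
    refine one_sub_rpow_mul_one_add_mul_le_one (by linarith) (by positivity) ?_
    rw [div_le_one (by positivity)]
    nlinarith
  have hT : t ^ (p - 1) ≤ A * (1 - t ^ (p - 1)) := by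
    have h := mul_le_mul_of_nonneg_left hkey hA0.le
    rw [mul_left_comm, mul_add, mul_one_div_cancel hA0.ne'] at h
    linarith
  have hlhs : (N - 1 / p) / (1 - 1 / p) = A * t := by
    rw [hA, ht]
    field_simp
  have hrhs : (p / (p - 1)) ^ p * N ^ p = A ^ (p - 1) * A := by
    rw [← rpow_add_one hA0.ne', sub_add_cancel, hA, mul_rpow (by linarith) (by positivity),
      mul_comm]
  rw [hlhs, hrhs, mul_rpow hA0.le ht0, mul_assoc]
  exact mul_le_mul_of_nonneg_left hT (by positivity)

section KaluzaSzego

variable {c : ℝ} {w : ℕ → ℝ} (hw1 : w 1 = 1)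
  (hrec : ∀ n : ℕ, 1 ≤ n → w (n + 1) = (((n : ℝ) - c) / n) * w n)
include hw1 hrec

lemma pos_of_rec (hc : c < 1) {n : ℕ} (hn : 1 ≤ n) : 0 < w n := by
  induction n, hn using Nat.le_induction with
  | base => rw [hw1]; exact one_pos
  | succ n hn ih =>
    have hn' : (1 : ℝ) ≤ n := by exact_mod_cast hn
    rw [hrec n hn]
    exact mul_pos (div_pos (by linarith) (by linarith)) ih

lemma sum_Icc_eq_of_rec (hc : c ≠ 1) {n : ℕ} (hn : 1 ≤ n) :
    ∑ i ∈ Icc 1 n, w i = (((n : ℝ) - c) / (1 - c)) * w n := by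
  have hc' : 1 - c ≠ 0 := sub_ne_zero.mpr hc.symm
  induction n, hn using Nat.le_induction with
  | base => simp [hw1, div_self hc']
  | succ n hn ih =>
    have hn0 : (n : ℝ) ≠ 0 := by positivity
    rw [sum_Icc_succ_top (by omega), ih, hrec n hn]
    push_cast
    field_simp
    ring

end KaluzaSzego

/-- The Kaluza–Szegő construction for Hardy's inequality. -/
theorem stmt_7 (p : ℝ) (hp : 1 < p) (w : ℕ → ℝ) (hw1 : w 1 = 1)
    (hrec : ∀ n : ℕ, 1 ≤ n → w (n + 1) = (((n : ℝ) - 1 / p) / (n : ℝ)) * w n) :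
    (∀ n : ℕ, 1 ≤ n → 0 < w n) ∧
    (∀ n : ℕ, 1 ≤ n →
      ∑ i ∈ Finset.Icc 1 n, w i = (((n : ℝ) - 1 / p) / (1 - 1 / p)) * w n) ∧
    (∀ n : ℕ, 1 ≤ n →
      (∑ i ∈ Finset.Icc 1 n, w i) ^ (p - 1) ≤
        (p / (p - 1)) ^ p * (n : ℝ) ^ p * (w n ^ (p - 1) - w (n + 1) ^ (p - 1))) := by
  have hc : 1 / p < 1 := (div_lt_one (by linarith)).mpr hp
  have hpos := fun n (hn : 1 ≤ n) => pos_of_rec hw1 hrec hc hn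
  have hsum := fun n (hn : 1 ≤ n) => sum_Icc_eq_of_rec hw1 hrec hc.ne hn
  refine ⟨hpos, hsum, fun n hn => ?_⟩
  have hn' : (1 : ℝ) ≤ n := by exact_mod_cast hn
  have hw := hpos n hn
  have hscalar := mul_le_mul_of_nonneg_right (rpow_le_mul_one_sub_rpow hp hn')
    (rpow_nonneg hw.le (p - 1))
  have hnc : 0 ≤ (n : ℝ) - 1 / p := by linarith
  rw [hsum n hn, hrec n hn, mul_rpow (div_nonneg hnc (by linarith)) hw.le,
    mul_rpow (div_nonneg hnc (by linarith)) hw.le]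
  linear_combination hscalar
end

section
/- Let N ≥ 1 be an integer, let a and b be positive real numbers, and let a_1, ..., a_N be real numbers. Then (a² + b² − 2ab·cos(π/(N+1))) · Σ_{n=1}^N a_n² ≤ b²a_1² + Σ_{n=1}^{N−1} (a·a_n − b·a_{n+1})² + a²a_N² ≤ (a² + b² + 2ab·cos(π/(N+1))) · Σ_{n=1}^N a_n². -/
/-!
The middle expression equals `(a² + b²) ∑ xₙ² - 2ab ∑ xₙ xₙ₊₁`, so both bounds follow from
the Fan–Taussky–Todd inequality `|∑ xₙ xₙ₊₁| ≤ cos (π / (N + 1)) ∑ xₙ²`. That inequality holds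
because `sₙ = sin (n π / (N + 1))` is a positive eigenvector, with eigenvalue `2 cos (π / (N + 1))`,
of the adjacency matrix of the path on `1, …, N`: estimating each `2 |xₙ xₙ₊₁|` by AM–GM with
weights `sₙ₊₁ / sₙ` and `sₙ / sₙ₊₁` and summing, the weights at each vertex add up to the eigenvalue.
-/

open Finset Real

lemma Finset.sum_Icc_one_add_one {M : Type*} [AddCommMonoid M] (f : ℕ → M) (m : ℕ) :
    ∑ n ∈ Icc 1 (m + 1), f n = f 1 + ∑ n ∈ Icc 1 m, f (n + 1) := by
  rw [← insert_Icc_add_one_left_eq_Icc (by omega : 1 ≤ m + 1), sum_insert (by simp),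
    ← map_add_right_Icc 1 m 1, sum_map]
  rfl

lemma two_mul_abs_mul_le_mul_sq_add_inv_mul_sq {u : ℝ} (hu : 0 < u) (x y : ℝ) :
    2 * |x * y| ≤ u * x ^ 2 + u⁻¹ * y ^ 2 := by
  have key : u * x ^ 2 + u⁻¹ * y ^ 2 - 2 * |x * y| = (u * |x| - |y|) ^ 2 / u := by
    rw [abs_mul]
    field_simp
    ring_nf
    simp only [sq_abs]
  linarith [div_nonneg (sq_nonneg (u * |x| - |y|)) hu.le]

section PathEigenvector

variable {s : ℕ → ℝ} {c : ℝ} {m : ℕ}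

lemma sum_weighted_sq_eq_of_eigenvector (x : ℕ → ℝ) (hs0 : s 0 = 0) (hsm : s (m + 2) = 0)
    (hpos : ∀ n ∈ Icc 1 (m + 1), s n ≠ 0) (hrec : ∀ n ≤ m, s (n + 2) + s n = c * s (n + 1)) :
    ∑ n ∈ Icc 1 m, (s (n + 1) / s n * x n ^ 2 + s n / s (n + 1) * x (n + 1) ^ 2) =
      c * ∑ n ∈ Icc 1 (m + 1), x n ^ 2 := by
  have hright : ∑ n ∈ Icc 1 m, s (n + 1) / s n * x n ^ 2 =
      ∑ n ∈ Icc 1 (m + 1), s (n + 1) / s n * x n ^ 2 := by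
    rw [sum_Icc_succ_top (by omega), hsm, zero_div, zero_mul, add_zero]
  have hleft : ∑ n ∈ Icc 1 m, s n / s (n + 1) * x (n + 1) ^ 2 =
      ∑ n ∈ Icc 1 (m + 1), s (n - 1) / s n * x n ^ 2 := by
    rw [sum_Icc_one_add_one, Nat.sub_self, hs0, zero_div, zero_mul, zero_add]
    rfl
  rw [sum_add_distrib, hright, hleft, ← sum_add_distrib, mul_sum]
  refine sum_congr rfl fun n hn => ?_
  obtain ⟨k, rfl⟩ : ∃ k, n = k + 1 := ⟨n - 1, by grind⟩
  have hk := hpos _ hn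
  rw [Nat.add_sub_cancel]
  field_simp
  linear_combination x (k + 1) ^ 2 * hrec k (by grind)

theorem two_mul_abs_sum_mul_succ_le_of_eigenvector (x : ℕ → ℝ) (hs0 : s 0 = 0)
    (hsm : s (m + 2) = 0) (hpos : ∀ n ∈ Icc 1 (m + 1), 0 < s n)
    (hrec : ∀ n ≤ m, s (n + 2) + s n = c * s (n + 1)) :
    2 * |∑ n ∈ Icc 1 m, x n * x (n + 1)| ≤ c * ∑ n ∈ Icc 1 (m + 1), x n ^ 2 :=
  calc 2 * |∑ n ∈ Icc 1 m, x n * x (n + 1)|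
      ≤ ∑ n ∈ Icc 1 m, 2 * |x n * x (n + 1)| := by
        rw [← mul_sum]
        exact mul_le_mul_of_nonneg_left (abs_sum_le_sum_abs _ _) zero_le_two
    _ ≤ ∑ n ∈ Icc 1 m, (s (n + 1) / s n * x n ^ 2 + s n / s (n + 1) * x (n + 1) ^ 2) := by
        refine sum_le_sum fun n hn => ?_
        have hn' : n ∈ Icc 1 (m + 1) := by grind
        have hn1 : n + 1 ∈ Icc 1 (m + 1) := by grind
        rw [← inv_div (s (n + 1)) (s n)]
        exact two_mul_abs_mul_le_mul_sq_add_inv_mul_sq (div_pos (hpos _ hn1) (hpos _ hn')) _ _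
    _ = c * ∑ n ∈ Icc 1 (m + 1), x n ^ 2 :=
        sum_weighted_sq_eq_of_eigenvector x hs0 hsm (fun n hn => (hpos n hn).ne') hrec

end PathEigenvector

lemma Real.sin_nat_add_two_mul_add_sin_nat_mul (n : ℕ) (t : ℝ) :
    sin ((n + 2 : ℕ) * t) + sin (n * t) = 2 * cos t * sin ((n + 1 : ℕ) * t) := by
  have h2 : ((n + 2 : ℕ) : ℝ) * t = (n + 1 : ℕ) * t + t := by push_cast; ring
  have h0 : (n : ℝ) * t = (n + 1 : ℕ) * t - t := by push_cast; ring
  rw [h2, h0, sin_add, sin_sub]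
  ring

lemma Real.sin_nat_mul_pi_div_pos {N n : ℕ} (hn : n ∈ Icc 1 N) :
    0 < sin (n * (π / (N + 1))) := by
  rw [mem_Icc] at hn
  apply sin_pos_of_pos_of_lt_pi
  · have : (0 : ℝ) < n := by exact_mod_cast hn.1
    positivity
  · rw [mul_div_assoc', div_lt_iff₀ (by positivity), mul_comm]
    gcongr
    exact_mod_cast Nat.lt_succ_of_le hn.2

theorem abs_sum_mul_succ_le_cos_mul_sum_sq (N : ℕ) (x : ℕ → ℝ) :
    |∑ n ∈ Icc 1 (N - 1), x n * x (n + 1)| ≤ cos (π / (N + 1)) * ∑ n ∈ Icc 1 N, x n ^ 2 := by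
  rcases N with _ | m
  · simp
  set t := π / ((m + 1 : ℕ) + 1 : ℝ)
  have hsm : sin ((m + 2 : ℕ) * t) = 0 := by
    rw [show ((m + 2 : ℕ) : ℝ) * t = π by simp only [t]; push_cast; field_simp; ring, sin_pi]
  have h := two_mul_abs_sum_mul_succ_le_of_eigenvector (s := fun n => sin (n * t)) x
    (by simp) hsm (fun n hn => sin_nat_mul_pi_div_pos hn)
    (fun n _ => sin_nat_add_two_mul_add_sin_nat_mul n t)
  simp only [Nat.add_sub_cancel]
  linarith

lemma boundary_add_sum_sq_sub_eq (N : ℕ) (hN : 1 ≤ N) (a b : ℝ) (x : ℕ → ℝ) :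
    b ^ 2 * x 1 ^ 2 + (∑ n ∈ Icc 1 (N - 1), (a * x n - b * x (n + 1)) ^ 2) + a ^ 2 * x N ^ 2 =
      (a ^ 2 + b ^ 2) * ∑ n ∈ Icc 1 N, x n ^ 2 -
        2 * a * b * ∑ n ∈ Icc 1 (N - 1), x n * x (n + 1) := by
  obtain ⟨m, rfl⟩ : ∃ m, N = m + 1 := ⟨N - 1, by omega⟩
  simp only [Nat.add_sub_cancel]
  have hexpand : ∑ n ∈ Icc 1 m, (a * x n - b * x (n + 1)) ^ 2 =
      a ^ 2 * ∑ n ∈ Icc 1 m, x n ^ 2 + b ^ 2 * ∑ n ∈ Icc 1 m, x (n + 1) ^ 2 -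
        2 * a * b * ∑ n ∈ Icc 1 m, x n * x (n + 1) := by
    simp only [mul_sum, ← sum_add_distrib, ← sum_sub_distrib]
    exact sum_congr rfl fun n _ => by ring
  rw [hexpand]
  linear_combination (-a ^ 2) * sum_Icc_succ_top (by omega : 1 ≤ m + 1) (fun n => x n ^ 2) -
    b ^ 2 * sum_Icc_one_add_one (fun n => x n ^ 2) m

/-- Theorem 5.2: two-parameter discrete Wirtinger-type inequalities. -/
theorem stmt_9 (N : ℕ) (hN : 1 ≤ N) (a b : ℝ) (ha : 0 < a) (hb : 0 < b)
    (x : ℕ → ℝ) :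
    (a ^ 2 + b ^ 2 - 2 * a * b * Real.cos (Real.pi / ((N : ℝ) + 1))) *
        ∑ n ∈ Finset.Icc 1 N, x n ^ 2 ≤
      b ^ 2 * x 1 ^ 2 +
        (∑ n ∈ Finset.Icc 1 (N - 1), (a * x n - b * x (n + 1)) ^ 2) +
        a ^ 2 * x N ^ 2 ∧
    b ^ 2 * x 1 ^ 2 +
        (∑ n ∈ Finset.Icc 1 (N - 1), (a * x n - b * x (n + 1)) ^ 2) +
        a ^ 2 * x N ^ 2 ≤
      (a ^ 2 + b ^ 2 + 2 * a * b * Real.cos (Real.pi / ((N : ℝ) + 1))) *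
        ∑ n ∈ Finset.Icc 1 N, x n ^ 2 := by
  rw [boundary_add_sum_sq_sub_eq N hN]
  obtain ⟨hlow, hupp⟩ := abs_le.mp (abs_sum_mul_succ_le_cos_mul_sum_sq N x)
  have hab : 0 ≤ 2 * a * b := by positivity
  constructor
  · nlinarith [mul_le_mul_of_nonneg_left hupp hab]
  · nlinarith [mul_le_mul_of_nonneg_left hlow hab]
end

section
/- Let p ≥ 2 be a real number and let α be a real number with 0 ≤ α ≤ 1. Then 1/2^α ≤ 1/(α+1) + (1 − 1/p)/(2(α+1)²). -/
/-!
Since `1 - 1/p ≥ 1/2`, it suffices to show `4 (α + 1)² ≤ 2^α (4α + 5)`. Writing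
`2^α = exp (α log 2)` and truncating the exponential series after the quadratic term turns this
into a polynomial inequality for `α ≥ 0`, which holds as soon as `log 2 ≥ 0.6931`.
-/

open Real

lemma one_add_add_sq_div_two_le_rpow {b x : ℝ} (hb : 1 ≤ b) (hx : 0 ≤ x) :
    1 + log b * x + (log b * x) ^ 2 / 2 ≤ b ^ x := by
  rw [rpow_def_of_pos (by linarith)]
  exact quadratic_le_exp_of_nonneg (mul_nonneg (log_nonneg hb) hx)

lemma four_mul_add_one_sq_le_quadratic_mul {c α : ℝ} (hc : 0.6931 ≤ c) (hα : 0 ≤ α) :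
    4 * (α + 1) ^ 2 ≤ (1 + c * α + (c * α) ^ 2 / 2) * (4 * α + 5) := by
  have h_at_bound : 4 * (α + 1) ^ 2 ≤ (1 + 0.6931 * α + (0.6931 * α) ^ 2 / 2) * (4 * α + 5) := by
    -- the gap `1 - 0.5345 α + 0.0925 α² + 0.9608 α³` dominates a multiple of `α (α - 0.44)²`
    nlinarith [mul_nonneg hα (sq_nonneg (α - 0.44))]
  have h_mono : (1 + 0.6931 * α + (0.6931 * α) ^ 2 / 2) * (4 * α + 5) ≤
      (1 + c * α + (c * α) ^ 2 / 2) * (4 * α + 5) := by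
    gcongr
  exact h_at_bound.trans h_mono

lemma four_mul_add_one_sq_le_two_rpow_mul {α : ℝ} (hα : 0 ≤ α) :
    4 * (α + 1) ^ 2 ≤ 2 ^ α * (4 * α + 5) :=
  (four_mul_add_one_sq_le_quadratic_mul (by linarith [log_two_gt_d9]) hα).trans <|
    mul_le_mul_of_nonneg_right (one_add_add_sq_div_two_le_rpow one_le_two hα) (by linarith)

lemma one_div_two_rpow_le {α : ℝ} (hα : 0 ≤ α) :
    1 / 2 ^ α ≤ 1 / (α + 1) + (1 / 2) / (2 * (α + 1) ^ 2) := by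
  have hα1 : 0 < α + 1 := by linarith
  rw [div_add_div _ _ hα1.ne' (by positivity), div_le_div_iff₀ (by positivity) (by positivity)]
  nlinarith [four_mul_add_one_sq_le_two_rpow_mul hα]

theorem stmt_12_general (p α : ℝ) (hp : 2 ≤ p) (hα : 0 ≤ α) :
    1 / 2 ^ α ≤ 1 / (α + 1) + (1 - 1 / p) / (2 * (α + 1) ^ 2) := by
  have hp_inv : 1 / 2 ≤ 1 - 1 / p := by
    have : 1 / p ≤ 1 / 2 := one_div_le_one_div_of_le two_pos hp
    linarith
  calc 1 / 2 ^ α ≤ 1 / (α + 1) + (1 / 2) / (2 * (α + 1) ^ 2) := one_div_two_rpow_le hα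
    _ ≤ 1 / (α + 1) + (1 - 1 / p) / (2 * (α + 1) ^ 2) := by gcongr

/-- Lemma 6.2. -/
theorem stmt_12 (p α : ℝ) (hp : 2 ≤ p) (hα : 0 ≤ α) (hα' : α ≤ 1) :
    1 / 2 ^ α ≤ 1 / (α + 1) + (1 - 1 / p) / (2 * (α + 1) ^ 2) :=
  stmt_12_general p α hp hα
end

section
/- For every integer n ≥ 1 and every real number r with 0 < r ≤ 1, one has (1/(r+1)) · n · (n+1)^r ≤ Σ_{i=1}^n i^r ≤ (r/(r+1)) · n^r (n+1)^r / ( (n+1)^r − n^r ). -/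
/-!
Both bounds telescope: it suffices to compare the increments of the two bounding sequences
with the new term `(x + 1) ^ r`. For the lower bound this is Bernoulli's inequality
`(1 + 1 / (x + 1)) ^ r ≤ 1 + r / (x + 1)`. For the upper bound, writing the three consecutive
powers `x ^ r, (x + 1) ^ r, (x + 2) ^ r` as `b (1 - s) ^ r, b, b (1 + s) ^ r` with
`s = 1 / (x + 1)`, the increment inequality becomes
`(1 + s) ^ r + (1 - s) ^ r ≤ 1 + r + (1 - r) (1 - s ^ 2) ^ r`. Both sides agree at `s = 0`, and
comparing derivatives reduces it to `2 (1 - r) s ≤ (1 + s) ^ (1 - r) - (1 - s) ^ (1 - r)`, whose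
derivative inequality is AM–GM for `(1 + s) ^ (-r)` and `(1 - s) ^ (-r)`, whose product is
at least 1.
-/

open Real Set Finset

theorem monotoneOn_Icc_of_hasDerivAt_nonneg {f f' : ℝ → ℝ} {a b : ℝ}
    (hf : ∀ t ∈ Icc a b, HasDerivAt f (f' t) t) (hf' : ∀ t ∈ Ioo a b, 0 ≤ f' t) :
    MonotoneOn f (Icc a b) := by
  refine monotoneOn_of_hasDerivWithinAt_nonneg (f' := f') (convex_Icc a b)
    (fun t ht ↦ (hf t ht).continuousAt.continuousWithinAt) (fun t ht ↦ ?_) (fun t ht ↦ ?_)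
  · rw [interior_Icc] at ht ⊢
    exact (hf t (Ioo_subset_Icc_self ht)).hasDerivWithinAt
  · rw [interior_Icc] at ht
    exact hf' t ht

theorem two_le_add_of_one_le_mul {a b : ℝ} (ha : 0 ≤ a) (hb : 0 ≤ b) (hab : 1 ≤ a * b) :
    2 ≤ a + b := by
  nlinarith [sq_nonneg (a - b)]

theorem two_mul_mul_le_one_add_rpow_sub_one_sub_rpow {p s : ℝ} (hp0 : 0 ≤ p) (hp1 : p ≤ 1)
    (hs0 : 0 ≤ s) (hs1 : s < 1) :
    2 * p * s ≤ (1 + s) ^ p - (1 - s) ^ p := by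
  have hderiv : ∀ t ∈ Icc 0 s, HasDerivAt (fun t ↦ (1 + t) ^ p - (1 - t) ^ p - 2 * p * t)
      (p * ((1 + t) ^ (p - 1) + (1 - t) ^ (p - 1) - 2)) t := by
    intro t ⟨ht0, hts⟩
    have hplus := ((hasDerivAt_id' t).const_add 1).rpow_const (p := p) (Or.inl (by simp; linarith))
    have hminus := ((hasDerivAt_id' t).const_sub 1).rpow_const (p := p) (Or.inl (by simp; linarith))
    exact ((hplus.sub hminus).sub ((hasDerivAt_id' t).const_mul (2 * p))).congr_deriv (by ring)
  have hmono := monotoneOn_Icc_of_hasDerivAt_nonneg hderiv fun t ⟨ht0, hts⟩ ↦ by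
    have hprod : 1 ≤ (1 + t) ^ (p - 1) * (1 - t) ^ (p - 1) := by
      rw [← mul_rpow (by linarith) (by linarith)]
      exact one_le_rpow_of_pos_of_le_one_of_nonpos (by nlinarith) (by nlinarith) (by linarith)
    have := two_le_add_of_one_le_mul (rpow_nonneg (by linarith) _) (rpow_nonneg (by linarith) _)
      hprod
    exact mul_nonneg hp0 (by linarith)
  have := hmono ⟨le_rfl, hs0⟩ ⟨hs0, le_rfl⟩ hs0
  simp only [add_zero, sub_zero, one_rpow, mul_zero, sub_self] at this
  linarith

theorem one_add_rpow_add_one_sub_rpow_le {r s : ℝ} (hr0 : 0 < r) (hr1 : r ≤ 1) (hs0 : 0 ≤ s)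
    (hs1 : s ≤ 1) :
    (1 + s) ^ r + (1 - s) ^ r ≤ 1 + r + (1 - r) * (1 - s ^ 2) ^ r := by
  rcases hs1.lt_or_eq with hs1 | rfl
  swap
  · have := rpow_one_add_le_one_add_mul_self (s := 1) (by norm_num) hr0.le hr1
    simp only [sub_self, one_pow, zero_rpow hr0.ne', mul_zero]
    linarith
  have hderiv : ∀ t ∈ Icc 0 s, HasDerivAt
      (fun t ↦ 1 + r + (1 - r) * (1 - t ^ 2) ^ r - (1 + t) ^ r - (1 - t) ^ r)
      (r * ((1 - t) ^ (r - 1) - (1 + t) ^ (r - 1)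
        - 2 * (1 - r) * t * ((1 - t) ^ (r - 1) * (1 + t) ^ (r - 1)))) t := by
    intro t ⟨ht0, hts⟩
    have hsq := ((hasDerivAt_pow 2 t).const_sub 1).rpow_const (p := r) (Or.inl (by nlinarith))
    have hplus := ((hasDerivAt_id' t).const_add 1).rpow_const (p := r) (Or.inl (by linarith))
    have hminus := ((hasDerivAt_id' t).const_sub 1).rpow_const (p := r) (Or.inl (by linarith))
    refine ((((hsq.const_mul (1 - r)).const_add (1 + r)).sub hplus).sub hminus).congr_deriv ?_
    rw [show 1 - t ^ 2 = (1 - t) * (1 + t) by ring, mul_rpow (by linarith) (by linarith)]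
    push_cast
    ring
  have hmono := monotoneOn_Icc_of_hasDerivAt_nonneg hderiv fun t ⟨ht0, hts⟩ ↦ by
    have hcancel : ∀ u : ℝ, 0 < u → u ^ (r - 1) * u ^ (1 - r) = 1 := fun u hu ↦ by
      rw [← rpow_add hu, sub_add_sub_cancel', sub_self, rpow_zero]
    have hplus := hcancel (1 + t) (by linarith)
    have hminus := hcancel (1 - t) (by linarith)
    have hW : 0 ≤ (1 - t) ^ (r - 1) * (1 + t) ^ (r - 1) :=
      mul_nonneg (rpow_nonneg (by linarith) _) (rpow_nonneg (by linarith) _)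
    have hbound := mul_le_mul_of_nonneg_left
      (two_mul_mul_le_one_add_rpow_sub_one_sub_rpow (p := 1 - r) (by linarith) (by linarith)
        ht0.le (hts.trans hs1)) hW
    have hexpand : (1 - t) ^ (r - 1) * (1 + t) ^ (r - 1) * ((1 + t) ^ (1 - r) - (1 - t) ^ (1 - r))
        = (1 - t) ^ (r - 1) - (1 + t) ^ (r - 1) := by
      linear_combination (1 - t) ^ (r - 1) * hplus - (1 + t) ^ (r - 1) * hminus
    exact mul_nonneg hr0.le (by linarith)
  have := hmono ⟨le_rfl, hs0⟩ ⟨hs0, le_rfl⟩ hs0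
  simp only [add_zero, sub_zero, one_rpow, ne_eq, OfNat.ofNat_ne_zero, not_false_eq_true,
    zero_pow, mul_one] at this
  linarith

noncomputable def powerSumLower (r x : ℝ) : ℝ := 1 / (r + 1) * x * (x + 1) ^ r

noncomputable def powerSumUpper (r x : ℝ) : ℝ :=
  r / (r + 1) * (x ^ r * (x + 1) ^ r / ((x + 1) ^ r - x ^ r))

theorem powerSumLower_succ_sub_le {r x : ℝ} (hr0 : 0 ≤ r) (hr1 : r ≤ 1) (hx : 0 ≤ x) :
    powerSumLower r (x + 1) - powerSumLower r x ≤ (x + 1) ^ r := by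
  have hx1 : 0 < x + 1 := by linarith
  have hbern := rpow_one_add_le_one_add_mul_self (s := (x + 1)⁻¹) (by
    have := inv_pos.2 hx1; linarith) hr0 hr1
  have hsplit : (x + 1 + 1) ^ r = (x + 1) ^ r * (1 + (x + 1)⁻¹) ^ r := by
    rw [← mul_rpow hx1.le (by positivity), mul_add, mul_inv_cancel₀ hx1.ne', mul_one]
  have hshift : (x + 1) * (1 + r * (x + 1)⁻¹) = x + 1 + r := by field_simp
  unfold powerSumLower
  rw [hsplit]
  calc 1 / (r + 1) * (x + 1) * ((x + 1) ^ r * (1 + (x + 1)⁻¹) ^ r)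
          - 1 / (r + 1) * x * (x + 1) ^ r
      ≤ 1 / (r + 1) * (x + 1) * ((x + 1) ^ r * (1 + r * (x + 1)⁻¹))
          - 1 / (r + 1) * x * (x + 1) ^ r := by gcongr
    _ = 1 / (r + 1) * (x + 1) ^ r * ((x + 1) * (1 + r * (x + 1)⁻¹) - x) := by ring
    _ = (x + 1) ^ r := by
      rw [hshift]
      field_simp
      ring

theorem le_powerSumUpper_succ_sub {r x : ℝ} (hr0 : 0 < r) (hr1 : r ≤ 1) (hx : 0 ≤ x) :
    (x + 1) ^ r ≤ powerSumUpper r (x + 1) - powerSumUpper r x := by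
  have hx1 : 0 < x + 1 := by linarith
  set s := (x + 1)⁻¹
  have hs0 : 0 < s := inv_pos.2 hx1
  have hs1 : s ≤ 1 := inv_le_one_of_one_le₀ (by linarith)
  set a := x ^ r
  set b := (x + 1) ^ r
  set c := (x + 1 + 1) ^ r
  have hb : 0 < b := rpow_pos_of_pos hx1 r
  have hab : a < b := rpow_lt_rpow hx (by linarith) hr0
  have hbc : b < c := rpow_lt_rpow hx1.le (by linarith) hr0
  have hc : c = b * (1 + s) ^ r := by
    rw [← mul_rpow hx1.le (by positivity), mul_add, mul_inv_cancel₀ hx1.ne', mul_one]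
  have ha : a = b * (1 - s) ^ r := by
    rw [← mul_rpow hx1.le (by linarith), mul_sub, mul_inv_cancel₀ hx1.ne', mul_one,
      add_sub_cancel_right]
  have hac : a * c = b ^ 2 * (1 - s ^ 2) ^ r := by
    rw [ha, hc, show 1 - s ^ 2 = (1 - s) * (1 + s) by ring, mul_rpow (by linarith) (by linarith)]
    ring
  have hkey : b * c + a * b ≤ (1 + r) * b ^ 2 + (1 - r) * (a * c) := by
    have := mul_le_mul_of_nonneg_left (one_add_rpow_add_one_sub_rpow_le hr0 hr1 hs0.le hs1)
      (sq_nonneg b)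
    rw [hac, ha, hc]
    linarith
  have hdiff : powerSumUpper r (x + 1) - powerSumUpper r x - b
      = b * ((1 + r) * b ^ 2 + (1 - r) * (a * c) - (b * c + a * b))
        / ((r + 1) * ((c - b) * (b - a))) := by
    rw [show powerSumUpper r (x + 1) = r / (r + 1) * (b * c / (c - b)) from rfl,
      show powerSumUpper r x = r / (r + 1) * (a * b / (b - a)) from rfl]
    field_simp [(by linarith : c - b ≠ 0), (by linarith : b - a ≠ 0)]
    ring
  have hden : 0 ≤ (r + 1) * ((c - b) * (b - a)) :=
    mul_nonneg (by linarith) (mul_nonneg (sub_nonneg.2 hbc.le) (sub_nonneg.2 hab.le))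
  have := div_nonneg (mul_nonneg hb.le (sub_nonneg.2 hkey)) hden
  linarith

section Telescoping

variable {M : Type*} [AddCommGroup M] [PartialOrder M] [IsOrderedAddMonoid M] {f g : ℕ → M}

theorem le_sum_Icc_of_sub_le (h0 : f 0 ≤ 0) (hstep : ∀ k, f (k + 1) - f k ≤ g (k + 1))
    (n : ℕ) :
    f n ≤ ∑ i ∈ Icc 1 n, g i := by
  induction n with
  | zero => simpa using h0
  | succ n ih =>
    rw [sum_Icc_succ_top (Nat.le_add_left 1 n), ← sub_add_cancel (f (n + 1)) (f n), add_comm]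
    exact add_le_add ih (hstep n)

theorem sum_Icc_le_of_le_sub (h0 : 0 ≤ f 0) (hstep : ∀ k, g (k + 1) ≤ f (k + 1) - f k)
    (n : ℕ) :
    ∑ i ∈ Icc 1 n, g i ≤ f n := by
  induction n with
  | zero => simpa using h0
  | succ n ih =>
    rw [sum_Icc_succ_top (Nat.le_add_left 1 n), ← sub_add_cancel (f (n + 1)) (f n),
      add_comm _ (f n)]
    exact add_le_add ih (hstep n)

end Telescoping

theorem stmt_13_general (n : ℕ) (r : ℝ) (hr : 0 < r) (hr' : r ≤ 1) :
    (1 / (r + 1)) * (n : ℝ) * ((n : ℝ) + 1) ^ r ≤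
        ∑ i ∈ Finset.Icc 1 n, (i : ℝ) ^ r ∧
    ∑ i ∈ Finset.Icc 1 n, (i : ℝ) ^ r ≤
      (r / (r + 1)) * ((n : ℝ) ^ r * ((n : ℝ) + 1) ^ r /
        (((n : ℝ) + 1) ^ r - (n : ℝ) ^ r)) := by
  constructor
  · refine le_sum_Icc_of_sub_le (f := fun k : ℕ ↦ powerSumLower r k)
      (by simp [powerSumLower]) (fun k ↦ ?_) n
    simpa only [Nat.cast_succ] using powerSumLower_succ_sub_le hr.le hr' k.cast_nonneg
  · refine sum_Icc_le_of_le_sub (f := fun k : ℕ ↦ powerSumUpper r k)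
      (by simp [powerSumUpper, hr.ne']) (fun k ↦ ?_) n
    simpa only [Nat.cast_succ] using le_powerSumUpper_succ_sub hr hr' k.cast_nonneg

/-- Lemma 6.3 (Levin–Stečkin): two-sided bounds for the power sum. -/
theorem stmt_13 (n : ℕ) (hn : 1 ≤ n) (r : ℝ) (hr : 0 < r) (hr' : r ≤ 1) :
    (1 / (r + 1)) * (n : ℝ) * ((n : ℝ) + 1) ^ r ≤
        ∑ i ∈ Finset.Icc 1 n, (i : ℝ) ^ r ∧
    ∑ i ∈ Finset.Icc 1 n, (i : ℝ) ^ r ≤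
      (r / (r + 1)) * ((n : ℝ) ^ r * ((n : ℝ) + 1) ^ r /
        (((n : ℝ) + 1) ^ r - (n : ℝ) ^ r)) :=
  stmt_13_general n r hr hr'
end

section
/- Let p ≥ 2 be a real number, let α be a real number with 0 ≤ α ≤ 1, and let n ≥ 1 be an integer. Then (Σ_{k=1}^{n+1} k^α)/(n+1)^α − (Σ_{k=1}^n k^α)/n^α ≤ 1/(α+1) + ( n^α / (2 Σ_{k=1}^n k^α) ) · (1 − 1/p) · 1/(α+1)². -/
/-!
Write `S = ∑_{k ≤ n} k ^ α`, `P = n ^ α`, `Q = (n + 1) ^ α`. Since `1 - 1 / p ≥ 1 / 2`, it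
suffices to bound `(S + Q) / Q - S / P` by `1 / (α + 1) + P / (4 S (α + 1) ^ 2)`. Clearing
denominators, this bounds a concave quadratic in `X = (α + 1) S`, and it follows from two midpoint
(Hermite–Hadamard) estimates: concavity of `x ^ α` gives
`X ≥ (n + 1/2) ^ (α + 1) - (1/2) ^ (α + 1) ≥ P (n + (α + 1) / 2) - (1/2) ^ (α + 1)`,
while convexity of `x ^ (α - 1)` and the weighted AM-GM inequality give
`α Q ≤ (Q - P) (n + (α + 1) / 2)`.
-/

open Real Set

theorem ConvexOn.two_mul_le_sub_of_hasDerivAt {f F : ℝ → ℝ} {c h : ℝ} (hh : 0 ≤ h)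
    (hf : ConvexOn ℝ (Icc (c - h) (c + h)) f)
    (hF : ∀ x ∈ Icc (c - h) (c + h), HasDerivAt F (f x) x) :
    2 * h * f c ≤ F (c + h) - F (c - h) := by
  have hmem : ∀ t ∈ Icc 0 h, c + t ∈ Icc (c - h) (c + h) ∧ c - t ∈ Icc (c - h) (c + h) :=
    fun t ⟨ht₀, hth⟩ ↦ ⟨⟨by linarith, by linarith⟩, ⟨by linarith, by linarith⟩⟩
  have hderiv : ∀ t ∈ Icc 0 h, HasDerivAt (fun t ↦ F (c + t) - F (c - t) - 2 * f c * t)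
      (f (c + t) + f (c - t) - 2 * f c) t := by
    intro t ht
    have hr := (hF _ (hmem t ht).1).comp_const_add c t
    have hl := (hF _ (hmem t ht).2).comp_const_sub c t
    exact ((hr.sub hl).sub ((hasDerivAt_id t).const_mul (2 * f c))).congr_deriv (by ring)
  have hmono : MonotoneOn (fun t ↦ F (c + t) - F (c - t) - 2 * f c * t) (Icc 0 h) := by
    refine monotoneOn_of_hasDerivWithinAt_nonneg (convex_Icc 0 h)
      (fun t ht ↦ (hderiv t ht).continuousAt.continuousWithinAt)
      (fun t ht ↦ (hderiv t (interior_subset ht)).hasDerivWithinAt) fun t ht ↦ ?_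
    obtain ⟨hr, hl⟩ := hmem t (interior_subset ht)
    have := hf.2 hr hl (by norm_num : (0 : ℝ) ≤ 1 / 2) (by norm_num : (0 : ℝ) ≤ 1 / 2)
      (by norm_num)
    simp only [smul_eq_mul] at this
    rw [show 1 / 2 * (c + t) + 1 / 2 * (c - t) = c by ring] at this
    linarith
  have := hmono ⟨le_rfl, hh⟩ ⟨hh, le_rfl⟩ hh
  simp only [add_zero, sub_zero, sub_self, mul_zero] at this
  linarith

theorem ConcaveOn.sub_le_two_mul_of_hasDerivAt {f F : ℝ → ℝ} {c h : ℝ} (hh : 0 ≤ h)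
    (hf : ConcaveOn ℝ (Icc (c - h) (c + h)) f)
    (hF : ∀ x ∈ Icc (c - h) (c + h), HasDerivAt F (f x) x) :
    F (c + h) - F (c - h) ≤ 2 * h * f c := by
  have := hf.neg.two_mul_le_sub_of_hasDerivAt hh fun x hx ↦ (hF x hx).neg
  simp only [Pi.neg_apply] at this
  linarith

theorem Real.convexOn_rpow_of_nonpos {p : ℝ} (hp : p ≤ 0) :
    ConvexOn ℝ (Ioi 0) fun x : ℝ ↦ x ^ p := by
  refine MonotoneOn.convexOn_of_deriv (convex_Ioi 0)
    (fun x hx ↦ (continuousAt_rpow_const x p (Or.inl hx.ne')).continuousWithinAt)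
    (fun x hx ↦
      (differentiableAt_rpow_const_of_ne p (interior_subset hx).ne').differentiableWithinAt) ?_
  rw [interior_Ioi, deriv_rpow_const']
  intro x hx y _ hxy
  exact mul_le_mul_of_nonpos_left (rpow_le_rpow_of_nonpos hx hxy (by linarith)) hp

theorem rpow_add_half_sub_rpow_sub_half_le {α x : ℝ} (hα : 0 ≤ α) (hα' : α ≤ 1)
    (hx : 1 / 2 ≤ x) :
    (x + 1 / 2) ^ (α + 1) - (x - 1 / 2) ^ (α + 1) ≤ (α + 1) * x ^ α := by
  have hconc : ConcaveOn ℝ (Icc (x - 1 / 2) (x + 1 / 2)) fun y : ℝ ↦ (α + 1) * y ^ α :=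
    ((concaveOn_rpow hα hα').subset (fun y hy ↦ mem_Ici.2 (by linarith [hy.1]))
      (convex_Icc _ _)).smul (by linarith)
  have hderiv : ∀ y ∈ Icc (x - 1 / 2) (x + 1 / 2),
      HasDerivAt (fun y : ℝ ↦ y ^ (α + 1)) ((α + 1) * y ^ α) y := fun y _ ↦ by
    simpa using hasDerivAt_rpow_const (x := y) (Or.inr (by linarith : 1 ≤ α + 1))
  have := hconc.sub_le_two_mul_of_hasDerivAt (by norm_num) hderiv
  linarith

theorem mul_rpow_sub_one_le_rpow_add_half_sub_rpow_sub_half {α x : ℝ} (hα : 0 ≤ α)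
    (hα' : α ≤ 1) (hx : 1 / 2 < x) :
    α * x ^ (α - 1) ≤ (x + 1 / 2) ^ α - (x - 1 / 2) ^ α := by
  have hconv : ConvexOn ℝ (Icc (x - 1 / 2) (x + 1 / 2)) fun y : ℝ ↦ α * y ^ (α - 1) :=
    ((convexOn_rpow_of_nonpos (by linarith)).subset (fun y hy ↦ mem_Ioi.2 (by linarith [hy.1]))
      (convex_Icc _ _)).smul hα
  have hderiv : ∀ y ∈ Icc (x - 1 / 2) (x + 1 / 2),
      HasDerivAt (fun y : ℝ ↦ y ^ α) (α * y ^ (α - 1)) y :=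
    fun y hy ↦ hasDerivAt_rpow_const (Or.inl (by linarith [hy.1]))
  have := hconv.two_mul_le_sub_of_hasDerivAt (by norm_num) hderiv
  linarith

theorem rpow_add_half_sub_le_sum_rpow {α : ℝ} (hα : 0 ≤ α) (hα' : α ≤ 1) (n : ℕ) :
    ((n : ℝ) + 1 / 2) ^ (α + 1) - (1 / 2) ^ (α + 1) ≤
      (α + 1) * ∑ k ∈ Finset.Icc 1 n, (k : ℝ) ^ α := by
  induction n with
  | zero => simp
  | succ n ih =>
    rw [Finset.sum_Icc_succ_top (by omega), mul_add, Nat.cast_succ]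
    have := rpow_add_half_sub_rpow_sub_half_le hα hα' (x := n + 1)
      (by linarith [n.cast_nonneg (α := ℝ)])
    rw [add_sub_assoc, show (1 : ℝ) - 1 / 2 = 1 / 2 by norm_num] at this
    linarith

theorem rpow_add_mul_rpow_sub_one_mul_le_rpow_add {p x y : ℝ} (hp : 1 ≤ p) (hx : 0 < x)
    (hxy : 0 ≤ x + y) : x ^ p + p * x ^ (p - 1) * y ≤ (x + y) ^ p := by
  have hs : -1 ≤ y / x := by rw [le_div_iff₀ hx]; linarith
  calc x ^ p + p * x ^ (p - 1) * y = x ^ p * (1 + p * (y / x)) := by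
        rw [rpow_sub_one hx.ne']; field_simp
    _ ≤ x ^ p * (1 + y / x) ^ p := by gcongr; exact one_add_mul_self_le_rpow_one_add hs hp
    _ = (x + y) ^ p := by
        rw [← mul_rpow hx.le (by linarith), mul_add, mul_one, mul_div_cancel₀ _ hx.ne']

theorem mul_half_rpow_add_one_le {α : ℝ} (hα : 0 ≤ α) (hα' : α ≤ 1) :
    α * (1 / 2 : ℝ) ^ (α + 1) ≤ 1 / 4 := by
  have h := rpow_one_add_le_one_add_mul_self (s := -1 / 2) (by norm_num) hα hα'
  rw [rpow_add_one (by norm_num)]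
  norm_num at h ⊢
  nlinarith [sq_nonneg (1 - α)]

theorem mul_rpow_add_one_le_sub_mul {α x : ℝ} (hα : 0 ≤ α) (hα' : α ≤ 1) (hx : 0 < x) :
    α * (x + 1) ^ α ≤ ((x + 1) ^ α - x ^ α) * (x + (α + 1) / 2) := by
  have hmid := mul_rpow_sub_one_le_rpow_add_half_sub_rpow_sub_half hα hα' (x := x + 1 / 2)
    (by linarith)
  rw [add_assoc, add_halves, add_sub_cancel_right] at hmid
  have hamgm : (x + 1) ^ α * (x + 1 / 2) ^ (1 - α) ≤ x + (α + 1) / 2 := by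
    have := geom_mean_le_arith_mean2_weighted (p₁ := x + 1) (p₂ := x + 1 / 2) hα
      (sub_nonneg.2 hα') (by linarith) (by linarith) (add_sub_cancel α 1)
    linarith
  have hcancel : (x + 1 / 2) ^ (α - 1) * (x + 1 / 2) ^ (1 - α) = 1 := by
    rw [← rpow_add (by linarith), sub_add_sub_cancel', sub_self, rpow_zero]
  calc α * (x + 1) ^ α
      = α * (x + 1 / 2) ^ (α - 1) * ((x + 1) ^ α * (x + 1 / 2) ^ (1 - α)) := by
        linear_combination (α * (x + 1) ^ α) * hcancel.symm
    _ ≤ ((x + 1) ^ α - x ^ α) * (x + (α + 1) / 2) :=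
        mul_le_mul hmid hamgm (by positivity) ((mul_nonneg hα (by positivity)).trans hmid)

theorem rpow_mul_add_sub_le_sum_rpow {α : ℝ} (hα : 0 ≤ α) (hα' : α ≤ 1) {n : ℕ}
    (hn : 0 < n) :
    (n : ℝ) ^ α * (n + (α + 1) / 2) - (1 / 2) ^ (α + 1) ≤
      (α + 1) * ∑ k ∈ Finset.Icc 1 n, (k : ℝ) ^ α := by
  have hn' : (0 : ℝ) < n := by exact_mod_cast hn
  have htangent := rpow_add_mul_rpow_sub_one_mul_le_rpow_add (p := α + 1) (y := 1 / 2)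
    (by linarith) hn' (by positivity)
  rw [add_sub_cancel_right, rpow_add_one hn'.ne'] at htangent
  linarith [rpow_add_half_sub_le_sum_rpow hα hα' n]

theorem add_div_sub_div_le_one_div_add_div {α S P Q M H : ℝ} (hα : 0 ≤ α) (hS : 0 < S)
    (hP : 1 ≤ P) (hQ : 0 < Q) (hM : 0 < M) (hQP : α * Q ≤ (Q - P) * M)
    (hPS : P * M - H ≤ (α + 1) * S) (hH : α * H ≤ 1 / 4) :
    (S + Q) / Q - S / P ≤ 1 / (α + 1) + P / (4 * S * (α + 1) ^ 2) := by
  have hP₀ : 0 < P := by linarith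
  set X := (α + 1) * S
  -- with `d = P M - X ≤ H`: `P M H - X d = P M (H - d) + d ^ 2`
  have hX : X * (P * M - X) ≤ P * M * H := by
    nlinarith [mul_nonneg (by positivity : 0 ≤ P * M) (by linarith : 0 ≤ H - (P * M - X)),
      sq_nonneg (P * M - X)]
  have key : α * X * P * Q - X ^ 2 * (Q - P) ≤ P ^ 2 * Q / 4 := by
    refine le_of_mul_le_mul_right ?_ hM
    calc (α * X * P * Q - X ^ 2 * (Q - P)) * M
        ≤ α * X * P * Q * M - X ^ 2 * (α * Q) := by nlinarith [sq_nonneg X]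
      _ = α * Q * (X * (P * M - X)) := by ring
      _ ≤ α * Q * (P * M * H) := by gcongr
      _ = P * Q * M * (α * H) := by ring
      _ ≤ P * Q * M * (1 / 4) := by gcongr
      _ ≤ P ^ 2 * Q / 4 * M := by
          nlinarith [mul_nonneg (mul_pos hP₀ (mul_pos hQ hM)).le (sub_nonneg.2 hP)]
  rw [← sub_nonneg]
  have e : 1 / (α + 1) + P / (4 * S * (α + 1) ^ 2) - ((S + Q) / Q - S / P) =
      (P ^ 2 * Q / 4 - (α * X * P * Q - X ^ 2 * (Q - P))) / (S * (α + 1) ^ 2 * P * Q) := by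
    field_simp
    ring
  rw [e]
  exact div_nonneg (by linarith) (by positivity)

/-- The key analytic inequality in the proof of Theorem 6.1. -/
theorem stmt_15 (p α : ℝ) (hp : 2 ≤ p) (hα : 0 ≤ α) (hα' : α ≤ 1)
    (n : ℕ) (hn : 1 ≤ n) :
    (∑ k ∈ Finset.Icc 1 (n + 1), (k : ℝ) ^ α) / ((n : ℝ) + 1) ^ α -
        (∑ k ∈ Finset.Icc 1 n, (k : ℝ) ^ α) / (n : ℝ) ^ α ≤
      1 / (α + 1) +
        ((n : ℝ) ^ α / (2 * ∑ k ∈ Finset.Icc 1 n, (k : ℝ) ^ α)) *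
          (1 - 1 / p) * (1 / (α + 1) ^ 2) := by
  set S := ∑ k ∈ Finset.Icc 1 n, (k : ℝ) ^ α
  have hn' : (1 : ℝ) ≤ n := by exact_mod_cast hn
  have hS : 0 < S :=
    Finset.sum_pos (fun k hk ↦ by have := (Finset.mem_Icc.1 hk).1; positivity)
      ⟨1, by simp [hn]⟩
  have hp' : 1 / 2 ≤ 1 - 1 / p := by
    rw [le_sub_comm, one_div_le (by linarith) (by norm_num)]; linarith
  rw [Finset.sum_Icc_succ_top (by omega), Nat.cast_succ]
  calc _ ≤ 1 / (α + 1) + (n : ℝ) ^ α / (4 * S * (α + 1) ^ 2) :=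
        add_div_sub_div_le_one_div_add_div hα hS (one_le_rpow hn' hα) (by positivity)
          (by positivity) (mul_rpow_add_one_le_sub_mul hα hα' (by positivity))
          (rpow_mul_add_sub_le_sum_rpow hα hα' hn) (mul_half_rpow_add_one_le hα hα')
    _ = 1 / (α + 1) + (n : ℝ) ^ α / (2 * S) * (1 / 2) * (1 / (α + 1) ^ 2) := by
        field_simp; ring
    _ ≤ _ := by gcongr
end

section
/- Let p, L be real numbers with 0 < p < 1 and L > p, and let (λ_n)_{n≥1} be positive reals with Λ_n = λ_1 + ... + λ_n. Suppose (w_n)_{n≥1} is a sequence of positive reals such that the sequence u_n := w_n^{−1/(1−p)} · Λ_n^{−p/(1−p)} is decreasing with limit 0, and such that for every n ≥ 1: (w_1 + ... + w_n)^{−1/(1−p)} · λ_n^{−p/(1−p)} ≤ ((L−p)/p)^{p/(1−p)} · (u_n − u_{n+1}). Then for every nonnegative real sequence (a_n) with Σ_{k=1}^∞ λ_k a_k < ∞: Σ_{n=1}^∞ ( (Σ_{k=n}^∞ λ_k a_k)^p / Λ_n^p ) ≥ (p/(L−p))^p · Σ_{n=1}^∞ a_n^p. -/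
/-!
Write `c = (L - p) / p`, `W_n = w_1 + ⋯ + w_n` and `d_n = u_n - u_{n+1}`. Raising the criterion
to the power `1 - p` gives `λ_n^{-p} ≤ c^p W_n d_n^{1-p}`, hence
`a_n^p ≤ c^p W_n (λ_n a_n)^p d_n^{1-p}`. Summing over `n` and exchanging the order of summation,
`∑ a_n^p ≤ c^p ∑_m w_m ∑_{n ≥ m} (λ_n a_n)^p d_n^{1-p}`. Hölder's inequality with exponents
`1/p` and `1/(1-p)` bounds the inner sum by `(∑_{n ≥ m} λ_n a_n)^p u_m^{1-p}`, since the `d_n`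
telescope to `u_m`, and `w_m u_m^{1-p} = Λ_m^{-p}`. Working in `ℝ≥0∞`
makes the exchange of summations and Hölder's inequality free of summability side conditions.
-/

open scoped ENNReal
open Finset Filter Topology

theorem Real.rpow_neg_one_div_mul_rpow_neg_div_rpow {x y : ℝ} (hx : 0 ≤ x) (hy : 0 ≤ y)
    (p : ℝ) {q : ℝ} (hq : q ≠ 0) :
    (x ^ (-(1 / q)) * y ^ (-(p / q))) ^ q = x⁻¹ * y ^ (-p) := by
  rw [Real.mul_rpow (Real.rpow_nonneg hx _) (Real.rpow_nonneg hy _), ← Real.rpow_mul hx,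
    ← Real.rpow_mul hy, neg_mul, neg_mul, div_mul_cancel₀ _ hq, div_mul_cancel₀ _ hq,
    Real.rpow_neg_one]

theorem Real.rpow_neg_le_of_criterion {p c W l d : ℝ} (hp : p < 1) (hc : 0 ≤ c) (hW : 0 < W)
    (hl : 0 ≤ l) (hd : 0 ≤ d)
    (h : W ^ (-(1 / (1 - p))) * l ^ (-(p / (1 - p))) ≤ c ^ (p / (1 - p)) * d) :
    l ^ (-p) ≤ c ^ p * (W * d ^ (1 - p)) := by
  have hq : 0 < 1 - p := by linarith
  have h' := Real.rpow_le_rpow (by positivity) h hq.le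
  rw [Real.rpow_neg_one_div_mul_rpow_neg_div_rpow hW.le hl p hq.ne',
    Real.mul_rpow (by positivity) hd, ← Real.rpow_mul hc, div_mul_cancel₀ _ hq.ne'] at h'
  calc l ^ (-p) = W * (W⁻¹ * l ^ (-p)) := by field_simp
    _ ≤ W * (c ^ p * d ^ (1 - p)) := by gcongr
    _ = c ^ p * (W * d ^ (1 - p)) := by ring

theorem ENNReal.ofReal_rpow_le_of_criterion {p c W l a d : ℝ} (hp : 0 < p) (hp' : p < 1)
    (hc : 0 ≤ c) (hW : 0 < W) (hl : 0 < l) (ha : 0 ≤ a) (hd : 0 ≤ d)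
    (h : W ^ (-(1 / (1 - p))) * l ^ (-(p / (1 - p))) ≤ c ^ (p / (1 - p)) * d) :
    ENNReal.ofReal (a ^ p) ≤ ENNReal.ofReal (c ^ p) *
      (ENNReal.ofReal W * (ENNReal.ofReal (l * a) ^ p * ENNReal.ofReal d ^ (1 - p))) := by
  have hla : 0 ≤ l * a := mul_nonneg hl.le ha
  have hreal : a ^ p ≤ c ^ p * (W * ((l * a) ^ p * d ^ (1 - p))) :=
    calc a ^ p = (l * a) ^ p * l ^ (-p) := by
          rw [Real.mul_rpow hl.le ha, Real.rpow_neg hl.le]; field_simp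
      _ ≤ (l * a) ^ p * (c ^ p * (W * d ^ (1 - p))) := by
          gcongr; exact Real.rpow_neg_le_of_criterion hp' hc hW hl.le hd h
      _ = c ^ p * (W * ((l * a) ^ p * d ^ (1 - p))) := by ring
  calc ENNReal.ofReal (a ^ p) ≤ ENNReal.ofReal (c ^ p * (W * ((l * a) ^ p * d ^ (1 - p)))) :=
        ENNReal.ofReal_le_ofReal hreal
    _ = _ := by
        rw [ENNReal.ofReal_mul (by positivity), ENNReal.ofReal_mul hW.le,
          ENNReal.ofReal_mul (by positivity), ENNReal.ofReal_rpow_of_nonneg hla hp.le,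
          ENNReal.ofReal_rpow_of_nonneg hd (by linarith)]

theorem ENNReal.ofReal_mul_rpow_mul_rpow_eq {p w Λ A : ℝ} (hp : 0 < p) (hp' : p < 1)
    (hw : 0 < w) (hΛ : 0 ≤ Λ) (hA : 0 ≤ A) :
    ENNReal.ofReal w * (ENNReal.ofReal A ^ p *
      ENNReal.ofReal (w ^ (-(1 / (1 - p))) * Λ ^ (-(p / (1 - p)))) ^ (1 - p)) =
      ENNReal.ofReal (A ^ p / Λ ^ p) := by
  have hq : 0 < 1 - p := by linarith
  rw [ENNReal.ofReal_rpow_of_nonneg hA hp.le, ENNReal.ofReal_rpow_of_nonneg (by positivity) hq.le,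
    Real.rpow_neg_one_div_mul_rpow_neg_div_rpow hw.le hΛ p hq.ne',
    ← ENNReal.ofReal_mul (by positivity), ← ENNReal.ofReal_mul hw.le, Real.rpow_neg hΛ]
  congr 1
  field_simp

theorem ENNReal.ofReal_sum_Icc_one {f : ℕ → ℝ} (n : ℕ) (hf : ∀ i, 1 ≤ i → 0 ≤ f i) :
    ENNReal.ofReal (∑ i ∈ Icc 1 n, f i) = ∑ m ∈ range n, ENNReal.ofReal (f (m + 1)) := by
  rw [ENNReal.ofReal_sum_of_nonneg fun i hi => hf i (mem_Icc.mp hi).1, ← Ico_add_one_right_eq_Icc,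
    sum_Ico_eq_sum_range, Nat.add_sub_cancel]
  simp only [add_comm 1]

theorem ENNReal.tsum_ofReal_sub_succ {u : ℕ → ℝ} (hdec : ∀ n, u (n + 1) ≤ u n)
    (hlim : Tendsto u atTop (𝓝 0)) :
    ∑' n, ENNReal.ofReal (u n - u (n + 1)) = ENNReal.ofReal (u 0) := by
  have hnonneg : ∀ n, 0 ≤ u n - u (n + 1) := fun n => sub_nonneg.mpr (hdec n)
  have hsum : HasSum (fun n => u n - u (n + 1)) (u 0) := by
    rw [hasSum_iff_tendsto_nat_of_nonneg hnonneg]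
    simp_rw [sum_range_sub']
    simpa using (tendsto_const_nhds (x := u 0)).sub (hlim.comp (tendsto_add_atTop_nat 0))
  rw [← ENNReal.ofReal_tsum_of_nonneg hnonneg hsum.summable, hsum.tsum_eq]

theorem ENNReal.tsum_ofReal_sub_succ_add {u : ℕ → ℝ} (m : ℕ)
    (hdec : ∀ n, m ≤ n → u (n + 1) ≤ u n) (hlim : Tendsto u atTop (𝓝 0)) :
    ∑' j, ENNReal.ofReal (u (m + j) - u (m + j + 1)) = ENNReal.ofReal (u m) := by
  simpa only [add_zero, add_assoc] using ENNReal.tsum_ofReal_sub_succ (u := fun j => u (m + j))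
    (fun j => hdec (m + j) (Nat.le_add_right m j))
    (((tendsto_add_atTop_iff_nat m).2 hlim).congr fun j => by rw [add_comm])

theorem ENNReal.ofReal_rpow_div_mul_ofReal_rpow_div {x y : ℝ} (hx : 0 < x) (hy : 0 < y) (p : ℝ) :
    ENNReal.ofReal ((x / y) ^ p) * ENNReal.ofReal ((y / x) ^ p) = 1 := by
  rw [← ENNReal.ofReal_mul (by positivity), ← Real.mul_rpow (by positivity) (by positivity),
    div_mul_div_cancel₀ hy.ne', div_self hx.ne',
    Real.one_rpow, ENNReal.ofReal_one]

theorem ENNReal.tsum_sum_range_succ_eq_tsum_tsum_add (f : ℕ → ℕ → ℝ≥0∞) :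
    ∑' k, ∑ m ∈ range (k + 1), f m k = ∑' m, ∑' j, f m (m + j) := by
  calc ∑' k, ∑ m ∈ range (k + 1), f m k
      = ∑' k, ∑ x ∈ antidiagonal k, f x.1 (x.1 + x.2) := by
        refine tsum_congr fun k => ?_
        rw [Nat.sum_antidiagonal_eq_sum_range_succ_mk]
        refine sum_congr rfl fun m hm => ?_
        rw [Nat.add_sub_cancel' (Nat.lt_succ_iff.mp (mem_range.mp hm))]
    _ = ∑' x : ℕ × ℕ, f x.1 (x.1 + x.2) := by
        rw [← HasAntidiagonal.sigmaAntidiagonalEquivProd.tsum_eq, ENNReal.tsum_sigma']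
        exact tsum_congr fun k => (Finset.tsum_subtype _ _).symm
    _ = ∑' m, ∑' j, f m (m + j) := ENNReal.tsum_prod (f := fun m j => f m (m + j))

theorem ENNReal.tsum_rpow_mul_rpow_one_sub_le {ι : Type*} {p : ℝ} (hp : 0 < p) (hp' : p < 1)
    (f g : ι → ℝ≥0∞) :
    ∑' i, f i ^ p * g i ^ (1 - p) ≤ (∑' i, f i) ^ p * (∑' i, g i) ^ (1 - p) := by
  have hq : 0 < 1 - p := by linarith
  let _ : MeasurableSpace ι := ⊤
  have hpq : (1 / p).HolderConjugate (1 / (1 - p)) :=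
    ⟨by simp only [one_div, inv_inv]; ring, by positivity, by positivity⟩
  have key := ENNReal.lintegral_mul_le_Lp_mul_Lq MeasureTheory.Measure.count hpq
    (measurable_from_top (f := fun i => f i ^ p)).aemeasurable
    (measurable_from_top (f := fun i => g i ^ (1 - p))).aemeasurable
  simpa only [MeasureTheory.lintegral_count, Pi.mul_apply, ← ENNReal.rpow_mul,
    mul_one_div_cancel hp.ne', mul_one_div_cancel hq.ne', ENNReal.rpow_one, one_div_one_div]
    using key

theorem ENNReal.tsum_le_mul_tsum_tail {p : ℝ} (hp : 0 < p) (hp' : p < 1) {C : ℝ≥0∞}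
    {A V F D : ℕ → ℝ≥0∞}
    (h : ∀ k, A k ≤ C * ((∑ m ∈ range (k + 1), V m) * (F k ^ p * D k ^ (1 - p)))) :
    ∑' k, A k ≤ C * ∑' m, V m * ((∑' j, F (m + j)) ^ p * (∑' j, D (m + j)) ^ (1 - p)) :=
  calc ∑' k, A k
      ≤ C * ∑' k, (∑ m ∈ range (k + 1), V m) * (F k ^ p * D k ^ (1 - p)) := by
        rw [← ENNReal.tsum_mul_left]; exact ENNReal.tsum_le_tsum h
    _ = C * ∑' m, V m * ∑' j, F (m + j) ^ p * D (m + j) ^ (1 - p) := by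
        simp_rw [sum_mul, ENNReal.tsum_sum_range_succ_eq_tsum_tsum_add, ENNReal.tsum_mul_left]
    _ ≤ C * ∑' m, V m * ((∑' j, F (m + j)) ^ p * (∑' j, D (m + j)) ^ (1 - p)) := by
        gcongr with m
        exact ENNReal.tsum_rpow_mul_rpow_one_sub_le hp hp' _ _

/-- The sufficient criterion (inequality (3.1') of Section 2) for the reversed
Copson-type inequality with constant `(p/(L-p))^p` in the range `0 < p < 1`.
The sums in the conclusion are taken in `ℝ≥0∞` since both sides may be infinite. -/
theorem stmt_17 (p L : ℝ) (hp : 0 < p) (hp' : p < 1) (hL : p < L)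
    (lam Lam : ℕ → ℝ)
    (hlam : ∀ n, 1 ≤ n → 0 < lam n)
    (hLam : ∀ n, Lam n = ∑ i ∈ Finset.Icc 1 n, lam i)
    (w : ℕ → ℝ) (hw : ∀ n, 1 ≤ n → 0 < w n)
    (u : ℕ → ℝ)
    (hu : ∀ n, 1 ≤ n → u n = w n ^ (-(1 / (1 - p))) * Lam n ^ (-(p / (1 - p))))
    (hdec : ∀ n, 1 ≤ n → u (n + 1) ≤ u n)
    (hlim : Filter.Tendsto u Filter.atTop (nhds 0))
    (hcond : ∀ n, 1 ≤ n →
      (∑ i ∈ Finset.Icc 1 n, w i) ^ (-(1 / (1 - p))) * lam n ^ (-(p / (1 - p))) ≤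
        ((L - p) / p) ^ (p / (1 - p)) * (u n - u (n + 1)))
    (a : ℕ → ℝ) (ha : ∀ n, 1 ≤ n → 0 ≤ a n)
    (hsum : Summable fun k : ℕ => lam (k + 1) * a (k + 1)) :
    ENNReal.ofReal ((p / (L - p)) ^ p) * ∑' n : ℕ, ENNReal.ofReal (a (n + 1) ^ p) ≤
      ∑' n : ℕ, ENNReal.ofReal
        ((∑' k : ℕ, lam (n + 1 + k) * a (n + 1 + k)) ^ p / Lam (n + 1) ^ p) := by
  have hLp : 0 < L - p := by linarith
  refine (mul_le_mul_right (ENNReal.tsum_le_mul_tsum_tail hp hp'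
    (C := ENNReal.ofReal (((L - p) / p) ^ p)) (V := fun m => ENNReal.ofReal (w (m + 1)))
    (F := fun k => ENNReal.ofReal (lam (k + 1) * a (k + 1)))
    (D := fun k => ENNReal.ofReal (u (k + 1) - u (k + 1 + 1))) fun k => ?_) _).trans_eq ?_
  · rw [← ENNReal.ofReal_sum_Icc_one _ fun i hi => (hw i hi).le]
    exact ENNReal.ofReal_rpow_le_of_criterion hp hp' (by positivity)
      (sum_pos (fun i hi => hw i (mem_Icc.mp hi).1) (nonempty_Icc.2 (by omega)))
      (hlam _ (by omega)) (ha _ (by omega)) (sub_nonneg.2 (hdec _ (by omega))) (hcond _ (by omega))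
  rw [← mul_assoc, ENNReal.ofReal_rpow_div_mul_ofReal_rpow_div hp hLp, one_mul]
  refine tsum_congr fun m => ?_
  have htailF : ∑' j, ENNReal.ofReal (lam (m + j + 1) * a (m + j + 1)) =
      ENNReal.ofReal (∑' k, lam (m + 1 + k) * a (m + 1 + k)) := by
    simp only [Nat.add_right_comm m _ 1]
    refine (ENNReal.ofReal_tsum_of_nonneg (fun k => mul_nonneg (hlam _ (by omega)).le
      (ha _ (by omega))) ?_).symm
    exact ((summable_nat_add_iff m).2 hsum).congr fun k => by
      rw [show k + m + 1 = m + 1 + k by omega]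
  have htailD : ∑' j, ENNReal.ofReal (u (m + j + 1) - u (m + j + 1 + 1)) =
      ENNReal.ofReal (u (m + 1)) := by
    simpa only [Nat.add_right_comm m _ 1] using
      ENNReal.tsum_ofReal_sub_succ_add (m + 1) (fun n hn => hdec n (by omega)) hlim
  rw [htailF, htailD, hu _ (by omega), hLam]
  exact ENNReal.ofReal_mul_rpow_mul_rpow_eq hp hp' (hw _ (by omega))
    (sum_nonneg fun i hi => (hlam i (mem_Icc.mp hi).1).le)
    (tsum_nonneg fun k => mul_nonneg (hlam _ (by omega)).le (ha _ (by omega)))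
end
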